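/- arXiv:2206.11823 — 13 statements merged into one kernel-verified Lean document; each statement's English description precedes it below -/
import Mathlib

section
/- Let m ≥ 1 and k_1, …, k_m ≥ 1 with k := k_1 + ⋯ + k_m, and let x_1, …, x_m ∈ ℂ. Consider the k×k matrix M whose rows are indexed by r ∈ {0, 1, …, k−1} and whose columns are indexed by pairs (i, j) with 1 ≤ i ≤ m and 0 ≤ j ≤ k_i − 1, with entry M_{r,(i,j)} = binom(r, j)·x_i^{r−j} (interpreted as 0 when j > r, since binom(r,j) = 0); that is, column (i,j) is (1/j!) times the j-th derivative of the column vector (1, x, x^2, …, x^{k−1})^T evaluated at x = x_i. Then there exists s ∈ {1, −1} such that det M = s · ∏_{1≤i<j≤m} (x_i − x_j)^{k_i·k_j}. -/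
open Polynomial Finset

namespace ConflAux

variable {m : ℕ} (κ : Fin m → ℕ) (x : Fin m → ℂ)

def Sacc (i : Fin m) : ℕ := ∑ l ∈ Finset.Iio i, κ l
def fidx (p : Σ i : Fin m, Fin (κ i)) : ℕ := Sacc κ p.1 + (p.2 : ℕ)

lemma fidx_lt (p : Σ i : Fin m, Fin (κ i)) : fidx κ p < ∑ l, κ l := by
  have h1 : Sacc κ p.1 + κ p.1 ≤ ∑ l, κ l := by
    calc Sacc κ p.1 + κ p.1 = ∑ l ∈ insert p.1 (Finset.Iio p.1), κ l := by
          rw [Finset.sum_insert (by simp), add_comm, Sacc]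
      _ ≤ _ := Finset.sum_le_sum_of_subset (Finset.subset_univ _)
  have := p.2.isLt
  unfold fidx; omega

lemma Sacc_add_le {i i' : Fin m} (h : i < i') : Sacc κ i + κ i ≤ Sacc κ i' := by
  have hsub : insert i (Finset.Iio i) ⊆ Finset.Iio i' := by
    intro l hl
    simp only [Finset.mem_insert, Finset.mem_Iio] at hl ⊢
    rcases hl with rfl | hl
    · exact h
    · exact hl.trans h
  calc Sacc κ i + κ i = ∑ l ∈ insert i (Finset.Iio i), κ l := by
        rw [Finset.sum_insert (by simp), add_comm, Sacc]
    _ ≤ _ := Finset.sum_le_sum_of_subset hsub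

lemma fidx_lt_of_lex {p q : Σ i : Fin m, Fin (κ i)}
    (h : q.1 < p.1 ∨ (q.1 = p.1 ∧ (q.2 : ℕ) < (p.2 : ℕ))) : fidx κ q < fidx κ p := by
  rcases h with h | ⟨h1, h2⟩
  · have := Sacc_add_le κ h
    have := q.2.isLt
    unfold fidx; omega
  · obtain ⟨i, p2⟩ := p; obtain ⟨i', q2⟩ := q
    cases h1
    simp only [fidx] at *
    omega

lemma fidx_inj : Function.Injective (fidx κ) := by
  intro p q h
  rcases lt_trichotomy p.1 q.1 with hlt | heq | hgt
  · exact absurd h (Nat.ne_of_gt (fidx_lt_of_lex κ (Or.inl hlt))).symm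
  · obtain ⟨i, p2⟩ := p
    obtain ⟨i', q2⟩ := q
    cases heq
    simp only [fidx] at h
    have : (p2 : ℕ) = (q2 : ℕ) := by omega
    simp [Fin.ext_iff, this]
  · exact absurd h (Nat.ne_of_gt (fidx_lt_of_lex κ (Or.inl hgt)))

lemma lex_of_fidx_lt {p q : Σ i : Fin m, Fin (κ i)} (h : fidx κ q < fidx κ p) :
    q.1 < p.1 ∨ (q.1 = p.1 ∧ (q.2 : ℕ) < (p.2 : ℕ)) := by
  rcases lt_trichotomy q.1 p.1 with hlt | heq | hgt
  · exact Or.inl hlt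
  · refine Or.inr ⟨heq, ?_⟩
    by_contra hle
    push_neg at hle
    rcases lt_or_eq_of_le hle with h2 | h2
    · exact absurd (fidx_lt_of_lex κ (Or.inr ⟨heq.symm, h2⟩)) (by omega)
    · obtain ⟨i, p2⟩ := p; obtain ⟨i', q2⟩ := q
      cases heq
      have h3 : (p2 : ℕ) = (q2 : ℕ) := h2
      simp only [fidx] at h
      omega
  · exact absurd (fidx_lt_of_lex κ (Or.inl hgt)) (by omega)

noncomputable def Pol (p : Σ i : Fin m, Fin (κ i)) : ℂ[X] :=
  (X - C (x p.1))^((p.2 : ℕ)) * ∏ l ∈ Finset.Iio p.1, (X - C (x l))^(κ l)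

lemma Pol_monic (p) : (Pol κ x p).Monic :=
  ((monic_X_sub_C _).pow _).mul
    (monic_prod_of_monic _ _ fun _ _ => (monic_X_sub_C _).pow _)

lemma Pol_natDegree (p) : (Pol κ x p).natDegree = fidx κ p := by
  rw [Pol, Monic.natDegree_mul ((monic_X_sub_C _).pow _)
    (monic_prod_of_monic _ _ fun _ _ => (monic_X_sub_C _).pow _),
    natDegree_pow, natDegree_X_sub_C, natDegree_prod_of_monic _ _
      (fun _ _ => (monic_X_sub_C _).pow _)]
  simp only [natDegree_pow, natDegree_X_sub_C, mul_one]
  rw [fidx, Sacc, add_comm]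

lemma hasse_eval_zero_of_dvd {a : ℂ} {n j : ℕ} (g : ℂ[X]) (hj : j < n) :
    (hasseDeriv j ((X - C a)^n * g)).eval a = 0 := by
  rw [← taylor_coeff, taylor_mul]
  have h1 : taylor a ((X - C a)^n) = X ^ n := by simp [taylor_apply, pow_comp, sub_comp]
  rw [h1, mul_comm, coeff_mul_X_pow', if_neg (by omega)]

lemma hasse_eval_diag {a : ℂ} {n : ℕ} (g : ℂ[X]) :
    (hasseDeriv n ((X - C a)^n * g)).eval a = g.eval a := by
  rw [← taylor_coeff, taylor_mul]
  have h1 : taylor a ((X - C a)^n) = X ^ n := by simp [taylor_apply, pow_comp, sub_comp]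
  rw [h1, mul_comm, coeff_mul_X_pow', if_pos le_rfl, Nat.sub_self, ← taylor_coeff_zero a g]

lemma Pol_vanish1 {p q : Σ i : Fin m, Fin (κ i)} (h1 : q.1 = p.1)
    (h2 : (q.2 : ℕ) < (p.2 : ℕ)) :
    (hasseDeriv (q.2 : ℕ) (Pol κ x p)).eval (x q.1) = 0 := by
  obtain ⟨i, pj⟩ := p; obtain ⟨i', qj⟩ := q
  cases h1
  exact hasse_eval_zero_of_dvd _ h2

lemma Pol_vanish2 {p q : Σ i : Fin m, Fin (κ i)} (h1 : q.1 < p.1) :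
    (hasseDeriv (q.2 : ℕ) (Pol κ x p)).eval (x q.1) = 0 := by
  have hmem : q.1 ∈ Finset.Iio p.1 := Finset.mem_Iio.2 h1
  have heq : Pol κ x p = (X - C (x q.1))^(κ q.1) *
      ((X - C (x p.1))^((p.2 : ℕ)) * ∏ l ∈ (Finset.Iio p.1).erase q.1, (X - C (x l))^(κ l)) := by
    rw [Pol, ← Finset.mul_prod_erase _ _ hmem]; ring
  rw [heq]; exact hasse_eval_zero_of_dvd _ q.2.isLt

lemma Pol_diag (p : Σ i : Fin m, Fin (κ i)) :
    (hasseDeriv (p.2 : ℕ) (Pol κ x p)).eval (x p.1)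
      = ∏ l ∈ Finset.Iio p.1, (x p.1 - x l)^(κ l) := by
  rw [Pol, hasse_eval_diag]
  simp [eval_prod]

lemma eval_hasse_as_sum {n : ℕ} {p : ℂ[X]} (h : p.natDegree < n) (j : ℕ) (a : ℂ) :
    ∑ r : Fin n, p.coeff r * (((r : ℕ).choose j : ℂ) * a ^ ((r : ℕ) - j))
      = (hasseDeriv j p).eval a := by
  conv_rhs => rw [p.as_sum_range' n h]
  rw [map_sum, eval_finset_sum, Fin.sum_univ_eq_sum_range
    (fun r => p.coeff r * (((r : ℕ).choose j : ℂ) * a ^ (r - j)))]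
  refine Finset.sum_congr rfl fun r _ => ?_
  rw [hasseDeriv_monomial, eval_monomial]
  ring

lemma prodpairs :
    (∏ p : Σ i : Fin m, Fin (κ i), (∏ l ∈ Finset.Iio p.1, (x p.1 - x l)^(κ l)))
      = ∏ pr ∈ Finset.univ.filter (fun pr : Fin m × Fin m => pr.1 < pr.2),
          (x pr.2 - x pr.1)^(κ pr.1 * κ pr.2) := by
  rw [← Finset.univ_sigma_univ, Finset.prod_sigma]
  have h1 : ∀ i : Fin m, (∏ _j : Fin (κ i), ∏ l ∈ Finset.Iio i, (x i - x l)^(κ l))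
      = ∏ l ∈ Finset.Iio i, (x i - x l)^(κ l * κ i) := by
    intro i
    rw [Finset.prod_const, ← Finset.prod_pow]
    exact Finset.prod_congr rfl fun l _ => by
      rw [← pow_mul, Finset.card_univ, Fintype.card_fin]
  calc (∏ i : Fin m, ∏ _j : Fin (κ i), ∏ l ∈ Finset.Iio i, (x i - x l)^(κ l))
      = ∏ i : Fin m, ∏ l ∈ Finset.Iio i, (x i - x l)^(κ l * κ i) :=
        Finset.prod_congr rfl fun i _ => h1 i
    _ = _ := by
        rw [Finset.prod_sigma']
        refine Finset.prod_bij (fun q _ => (q.2, q.1)) ?_ ?_ ?_ ?_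
        · rintro ⟨i, l⟩ hq
          simp only [Finset.mem_sigma, Finset.mem_Iio] at hq
          simp [hq.2]
        · rintro ⟨i, l⟩ hq ⟨i', l'⟩ hq' h
          simp only [Prod.mk.injEq] at h
          simp [Sigma.ext_iff, h.1, h.2]
        · rintro ⟨a, b⟩ hp
          simp only [Finset.mem_filter, Finset.mem_univ, true_and] at hp
          exact ⟨⟨b, a⟩, by simp [hp], rfl⟩
        · rintro ⟨i, l⟩ hq
          rfl

end ConflAux

open ConflAux in
theorem stmt4 (m : ℕ) (hm : 1 ≤ m) (κ : Fin m → ℕ) (hκ : ∀ i, 1 ≤ κ i)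
    (k : ℕ) (hk : k = ∑ i, κ i) (x : Fin m → ℂ)
    (e : Fin k ≃ (Σ i : Fin m, Fin (κ i))) :
    ∃ s : ℂ, (s = 1 ∨ s = -1) ∧
      Matrix.det (Matrix.of fun r c : Fin k =>
        (Nat.choose (r : ℕ) (((e c).2 : ℕ)) : ℂ) * x (e c).1 ^ ((r : ℕ) - ((e c).2 : ℕ)))
      = s * ∏ p ∈ Finset.univ.filter (fun p : Fin m × Fin m => p.1 < p.2),
          (x p.1 - x p.2) ^ (κ p.1 * κ p.2) := by
  subst hk
  -- the order equivalence
  have hbij : Function.Bijective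
      (fun p : Σ i : Fin m, Fin (κ i) => (⟨fidx κ p, fidx_lt κ p⟩ : Fin (∑ i, κ i))) := by
    rw [Fintype.bijective_iff_injective_and_card]
    constructor
    · intro p q h
      exact fidx_inj κ (by simpa [Fin.ext_iff] using h)
    · simp
  let d : (Σ i : Fin m, Fin (κ i)) ≃ Fin (∑ i, κ i) := Equiv.ofBijective _ hbij
  have hd : ∀ p, (d p : ℕ) = fidx κ p := fun p => rfl
  let π : Equiv.Perm (Fin (∑ i, κ i)) := e.trans d
  set M : Matrix (Fin (∑ i, κ i)) (Fin (∑ i, κ i)) ℂ := Matrix.of fun r c : Fin (∑ i, κ i) =>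
        (Nat.choose (r : ℕ) (((e c).2 : ℕ)) : ℂ) * x (e c).1 ^ ((r : ℕ) - ((e c).2 : ℕ))
    with hM
  let Cm : Matrix (Fin (∑ i, κ i)) (Fin (∑ i, κ i)) ℂ := Matrix.of fun r s => (Pol κ x (e r)).coeff s
  let C' : Matrix (Fin (∑ i, κ i)) (Fin (∑ i, κ i)) ℂ := Matrix.of fun r s => (Pol κ x (d.symm r)).coeff s
  let N' : Matrix (Fin (∑ i, κ i)) (Fin (∑ i, κ i)) ℂ := Matrix.of fun r c =>
    (hasseDeriv ((d.symm c).2 : ℕ) (Pol κ x (d.symm r))).eval (x (d.symm c).1)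
  have hfd : ∀ r : Fin (∑ i, κ i), fidx κ (d.symm r) = (r : ℕ) := by
    intro r
    rw [← hd, Equiv.apply_symm_apply]
  -- determinant of C'
  have hC'tri : C'.BlockTriangular OrderDual.toDual := by
    intro i j h
    have hij : (i : ℕ) < (j : ℕ) := h
    show (Pol κ x (d.symm i)).coeff (j : ℕ) = 0
    refine Polynomial.coeff_eq_zero_of_natDegree_lt ?_
    rw [Pol_natDegree, hfd]
    exact hij
  have hC'det : C'.det = 1 := by
    rw [Matrix.det_of_lowerTriangular _ hC'tri]
    refine Finset.prod_eq_one fun r _ => ?_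
    show (Pol κ x (d.symm r)).coeff (r : ℕ) = 1
    have hdeg : (Pol κ x (d.symm r)).natDegree = (r : ℕ) := by rw [Pol_natDegree, hfd]
    have := (Pol_monic κ x (d.symm r)).coeff_natDegree
    rw [hdeg] at this
    exact this
  -- Cm is a row permutation of C'
  have hsymmπ : ∀ r, d.symm (π r) = e r := fun r => by
    simp only [π, Equiv.trans_apply, Equiv.symm_apply_apply]
  have hCm : Cm = C'.submatrix π id := by
    ext r s
    show (Pol κ x (e r)).coeff (s : ℕ) = (Pol κ x (d.symm (π r))).coeff (s : ℕ)
    rw [hsymmπ]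
  have hCmdet : Cm.det = ((Equiv.Perm.sign π : ℤ) : ℂ) := by
    rw [hCm, Matrix.det_permute, hC'det, mul_one]
  -- the product identity
  have hprod : Cm * M = N'.submatrix π π := by
    ext r c
    rw [Matrix.mul_apply]
    have hdegr : (Pol κ x (e r)).natDegree < ∑ i, κ i := by
      rw [Pol_natDegree]; exact fidx_lt κ _
    have := eval_hasse_as_sum hdegr ((e c).2 : ℕ) (x (e c).1)
    simp only [Cm, Matrix.of_apply, hM, Matrix.submatrix_apply]
    rw [this]
    show _ = (hasseDeriv ((d.symm (π c)).2 : ℕ) (Pol κ x (d.symm (π r)))).eval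
      (x (d.symm (π c)).1)
    rw [hsymmπ, hsymmπ]
  -- N' is upper triangular
  have hN'tri : N'.BlockTriangular id := by
    intro i j h
    show (hasseDeriv (((d.symm j)).2 : ℕ) (Pol κ x (d.symm i))).eval (x (d.symm j).1) = 0
    have hlt : fidx κ (d.symm j) < fidx κ (d.symm i) := by
      rw [hfd, hfd]; exact h
    rcases lex_of_fidx_lt κ hlt with hc | ⟨hc1, hc2⟩
    · exact Pol_vanish2 κ x hc
    · exact Pol_vanish1 κ x hc1 hc2
  have hN'det : N'.det = ∏ p : Σ i : Fin m, Fin (κ i),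
      ∏ l ∈ Finset.Iio p.1, (x p.1 - x l)^(κ l) := by
    rw [Matrix.det_of_upperTriangular hN'tri]
    rw [← Equiv.prod_comp d.symm
      (fun p => ∏ l ∈ Finset.Iio p.1, (x p.1 - x l)^(κ l))]
    exact Finset.prod_congr rfl fun r _ => Pol_diag κ x (d.symm r)
  -- combine
  set T := ∏ p ∈ Finset.univ.filter (fun p : Fin m × Fin m => p.1 < p.2),
      (x p.1 - x p.2) ^ (κ p.1 * κ p.2) with hT
  set E := ∑ p ∈ Finset.univ.filter (fun p : Fin m × Fin m => p.1 < p.2),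
      (κ p.1 * κ p.2) with hE
  have hT' : (∏ pr ∈ Finset.univ.filter (fun pr : Fin m × Fin m => pr.1 < pr.2),
      (x pr.2 - x pr.1)^(κ pr.1 * κ pr.2)) = (-1 : ℂ)^E * T := by
    rw [hT, hE, ← Finset.prod_pow_eq_pow_sum, ← Finset.prod_mul_distrib]
    refine Finset.prod_congr rfl fun pr _ => ?_
    rw [← neg_pow, neg_sub]
  set ε : ℂ := ((Equiv.Perm.sign π : ℤ) : ℂ) with hε
  have hεcases : ε = 1 ∨ ε = -1 := by
    rcases Int.units_eq_one_or (Equiv.Perm.sign π) with h | h <;> simp [hε, h]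
  have hεε : ε * ε = 1 := by rcases hεcases with h | h <;> simp [h]
  have hmain : ε * M.det = (-1 : ℂ)^E * T := by
    calc ε * M.det = Cm.det * M.det := by rw [hCmdet]
      _ = (Cm * M).det := (Matrix.det_mul _ _).symm
      _ = (N'.submatrix π π).det := by rw [hprod]
      _ = N'.det := Matrix.det_submatrix_equiv_self _ _
      _ = _ := by rw [hN'det, prodpairs κ x, hT']
  refine ⟨ε * (-1 : ℂ)^E, ?_, ?_⟩
  · rcases hεcases with h | h <;> rcases Nat.even_or_odd E with hp | hp <;>
      simp [h, hp.neg_one_pow]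
  · have : M.det = ε * ((-1 : ℂ)^E * T) := by
      calc M.det = (ε * ε) * M.det := by rw [hεε, one_mul]
        _ = ε * (ε * M.det) := by ring
        _ = _ := by rw [hmain]
    rw [hM] at this
    rw [this]; ring
end

section
/- Let m ≥ 1 and k_1, …, k_m ≥ 1 with k := k_1 + ⋯ + k_m, and let x_1, …, x_m ∈ ℂ. Consider the k×k matrix M whose rows are indexed by r ∈ {0, 1, …, k−1} and whose columns are indexed by pairs (i, j) with 1 ≤ i ≤ m and 0 ≤ j ≤ k_i − 1, with entry M_{r,(i,j)} = r^j · x_i^r / j! (with the convention 0^0 = 1). Then there exists s ∈ {1, −1} such that det M = s · ∏_{j=1}^m x_j^{binom(k_j,2)} · ∏_{1≤i<j≤m} (x_i − x_j)^{k_i·k_j}. -/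
open Polynomial Finset

namespace Stmt5Aux

noncomputable def theta : Module.End ℂ (Polynomial ℂ) where
  toFun p := Polynomial.X * Polynomial.derivative p
  map_add' p q := by simp [mul_add]
  map_smul' c p := by simp [mul_smul_comm]

lemma theta_apply (p : ℂ[X]) : theta p = X * derivative p := rfl

lemma theta_X_pow (r : ℕ) : theta (X ^ r : ℂ[X]) = (r : ℂ) • X ^ r := by
  cases r with
  | zero => simp [theta_apply]
  | succ n =>
    rw [theta_apply, derivative_X_pow, smul_eq_C_mul]
    push_cast
    rw [pow_succ]
    ring

lemma theta_pow_X_pow (j r : ℕ) : (theta ^ j) (X ^ r : ℂ[X]) = ((r : ℂ) ^ j) • X ^ r := by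
  induction j with
  | zero => simp
  | succ j ih =>
    rw [pow_succ, Module.End.mul_apply, theta_X_pow, map_smul, ih, smul_smul, pow_succ]
    ring_nf

lemma dvd_theta_pow (a : ℂ) : ∀ (j : ℕ) (p : ℂ[X]), (X - C a) ^ (j + 1) ∣ p →
    (X - C a) ∣ (theta ^ j) p := by
  intro j
  induction j with
  | zero => intro p h; simpa using (pow_one (X - C a) ▸ h)
  | succ j ih =>
    intro p h
    obtain ⟨u, rfl⟩ := h
    rw [pow_succ, Module.End.mul_apply]
    apply ih
    refine ⟨X * (C ((j : ℂ) + 2) * u + (X - C a) * derivative u), ?_⟩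
    rw [theta_apply, derivative_mul, derivative_pow, derivative_X_sub_C]
    have h2 : j + 1 + 1 - 1 = j + 1 := rfl
    rw [h2]
    push_cast
    ring

lemma eval_theta_pow_eq_zero {j : ℕ} {a : ℂ} {p : ℂ[X]} (h : (X - C a) ^ (j + 1) ∣ p) :
    ((theta ^ j) p).eval a = 0 := by
  have := dvd_theta_pow a j p h
  rw [Polynomial.dvd_iff_isRoot] at this
  exact this

lemma eval_theta_pow_diag (a : ℂ) : ∀ (j : ℕ) (g : ℂ[X]),
    ((theta ^ j) ((X - C a) ^ j * g)).eval a = (j.factorial : ℂ) * a ^ j * g.eval a := by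
  intro j
  induction j with
  | zero => intro g; simp
  | succ j ih =>
    intro g
    have hsplit : theta ((X - C a) ^ (j + 1) * g)
        = (X - C a) ^ j * (C ((j : ℂ) + 1) * (X * g)) + (X - C a) ^ (j + 1) * (X * derivative g) := by
      rw [theta_apply, derivative_mul, derivative_pow, derivative_X_sub_C]
      have h2 : j + 1 - 1 = j := rfl
      rw [h2]
      push_cast
      ring
    rw [pow_succ, Module.End.mul_apply, hsplit, map_add, eval_add,
      eval_theta_pow_eq_zero ⟨X * derivative g, rfl⟩, add_zero, ih]
    rw [Nat.factorial_succ]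
    push_cast
    simp [eval_mul, eval_pow]
    ring

section Main

variable {m : ℕ} (κ : Fin m → ℕ) (x : Fin m → ℂ)

/-- The auxiliary product polynomial. -/
noncomputable def G (i : Fin m) : ℂ[X] :=
  ∏ l ∈ univ.filter (· < i), (X - C (x l)) ^ κ l

/-- The Newton-type basis polynomial attached to a column. -/
noncomputable def pb (c : Σ i : Fin m, Fin (κ i)) : ℂ[X] :=
  (X - C (x c.1)) ^ (c.2 : ℕ) * G κ x c.1

/-- The degree of `pb c`. -/
def dg (c : Σ i : Fin m, Fin (κ i)) : ℕ :=
  (∑ l ∈ univ.filter (· < c.1), κ l) + (c.2 : ℕ)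

lemma G_monic (i : Fin m) : (G κ x i).Monic :=
  monic_prod_of_monic _ _ fun l _ => (monic_X_sub_C (x l)).pow (κ l)

lemma pb_monic (c : Σ i : Fin m, Fin (κ i)) : (pb κ x c).Monic :=
  ((monic_X_sub_C (x c.1)).pow _).mul (G_monic κ x c.1)

lemma G_natDegree (i : Fin m) : (G κ x i).natDegree = ∑ l ∈ univ.filter (· < i), κ l := by
  rw [G, natDegree_prod_of_monic _ _ fun l _ => (monic_X_sub_C (x l)).pow (κ l)]
  simp [natDegree_pow]

lemma pb_natDegree (c : Σ i : Fin m, Fin (κ i)) : (pb κ x c).natDegree = dg κ c := by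
  rw [pb, Monic.natDegree_mul ((monic_X_sub_C (x c.1)).pow _) (G_monic κ x c.1),
    natDegree_pow, natDegree_X_sub_C, G_natDegree, dg]
  ring

lemma dg_lt (c : Σ i : Fin m, Fin (κ i)) : dg κ c < ∑ i, κ i := by
  have h1 : ∑ i, κ i = (∑ l ∈ univ.filter (· < c.1), κ l) + ∑ l ∈ univ.filter (¬ · < c.1), κ l :=
    (Finset.sum_filter_add_sum_filter_not univ _ κ).symm
  have h2 : κ c.1 ≤ ∑ l ∈ univ.filter (¬ · < c.1), κ l := by
    apply Finset.single_le_sum (f := κ) (fun l _ => Nat.zero_le _)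
    simp
  have h3 : (c.2 : ℕ) < κ c.1 := c.2.isLt
  rw [dg]
  omega

lemma dg_mono {c c' : Σ i : Fin m, Fin (κ i)}
    (h : c.1 < c'.1 ∨ (c.1 = c'.1 ∧ (c.2 : ℕ) < (c'.2 : ℕ))) : dg κ c < dg κ c' := by
  rcases h with h | ⟨h1, h2⟩
  · have hsub : insert c.1 (univ.filter (· < c.1)) ⊆ univ.filter (· < c'.1) := by
      intro l hl
      simp only [Finset.mem_insert, Finset.mem_filter, Finset.mem_univ, true_and] at hl ⊢
      rcases hl with rfl | hl
      · exact h
      · exact lt_trans hl h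
    have hins : κ c.1 + ∑ l ∈ univ.filter (· < c.1), κ l
        = ∑ l ∈ insert c.1 (univ.filter (· < c.1)), κ l := by
      rw [Finset.sum_insert (by simp)]
    have hle : ∑ l ∈ insert c.1 (univ.filter (· < c.1)), κ l
        ≤ ∑ l ∈ univ.filter (· < c'.1), κ l :=
      Finset.sum_le_sum_of_subset hsub
    have h3 : (c.2 : ℕ) < κ c.1 := c.2.isLt
    rw [dg, dg]
    omega
  · have hs : ∑ l ∈ univ.filter (· < c.1), κ l = ∑ l ∈ univ.filter (· < c'.1), κ l := by
      rw [h1]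
    rw [dg, dg]
    omega

end Main


end Stmt5Aux

open Polynomial Finset Stmt5Aux in
theorem stmt5 (m : ℕ) (hm : 1 ≤ m) (κ : Fin m → ℕ) (hκ : ∀ i, 1 ≤ κ i)
    (k : ℕ) (hk : k = ∑ i, κ i) (x : Fin m → ℂ)
    (e : Fin k ≃ (Σ i : Fin m, Fin (κ i))) :
    ∃ s : ℂ, (s = 1 ∨ s = -1) ∧
      Matrix.det (Matrix.of fun r c : Fin k =>
        ((r : ℕ) : ℂ) ^ (((e c).2 : ℕ)) * x (e c).1 ^ (r : ℕ)
          / (Nat.factorial ((e c).2 : ℕ) : ℂ))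
      = s * (∏ j, x j ^ ((κ j).choose 2)) *
          ∏ p ∈ Finset.univ.filter (fun p : Fin m × Fin m => p.1 < p.2),
            (x p.1 - x p.2) ^ (κ p.1 * κ p.2) := by
  classical
  have hdlt : ∀ c : Σ i : Fin m, Fin (κ i), dg κ c < k := fun c => hk ▸ dg_lt κ c
  let dF : (Σ i : Fin m, Fin (κ i)) → Fin k := fun c => ⟨dg κ c, hdlt c⟩
  have hinj : Function.Injective dF := by
    intro c c' h
    have hv : dg κ c = dg κ c' := congrArg Fin.val h
    obtain ⟨i, j⟩ := c; obtain ⟨i', j'⟩ := c'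
    rcases lt_trichotomy i i' with hi | hi | hi
    · exact absurd hv (Nat.ne_of_lt (dg_mono κ (Or.inl hi)))
    · subst hi
      rcases lt_trichotomy (j : ℕ) (j' : ℕ) with hj | hj | hj
      · exact absurd hv (Nat.ne_of_lt (dg_mono κ (Or.inr ⟨rfl, hj⟩)))
      · congr 1
        exact Fin.ext hj
      · exact absurd hv.symm (Nat.ne_of_lt (dg_mono κ (Or.inr ⟨rfl, hj⟩)))
    · exact absurd hv.symm (Nat.ne_of_lt (dg_mono κ (Or.inl hi)))
  have hcard : Fintype.card (Σ i : Fin m, Fin (κ i)) = Fintype.card (Fin k) := by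
    simp [hk]
  let δ : (Σ i : Fin m, Fin (κ i)) ≃ Fin k :=
    Equiv.ofBijective dF ((Fintype.bijective_iff_injective_and_card dF).2 ⟨hinj, hcard⟩)
  have hδs : ∀ r : Fin k, dg κ (δ.symm r) = (r : ℕ) := fun r =>
    congrArg Fin.val (δ.apply_symm_apply r)
  -- the three matrices
  let A : Matrix (Σ i : Fin m, Fin (κ i)) (Fin k) ℂ := Matrix.of fun c r => (pb κ x c).coeff r
  let Mt : Matrix (Fin k) (Σ i : Fin m, Fin (κ i)) ℂ := Matrix.of fun r c =>
    ((r : ℕ) : ℂ) ^ (c.2 : ℕ) * x c.1 ^ (r : ℕ) / (Nat.factorial (c.2 : ℕ) : ℂ)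
  let B : Matrix (Σ i : Fin m, Fin (κ i)) (Σ i : Fin m, Fin (κ i)) ℂ := Matrix.of fun c c' =>
    ((theta ^ (c'.2 : ℕ)) (pb κ x c)).eval (x c'.1) / (Nat.factorial (c'.2 : ℕ) : ℂ)
  have hpled : ∀ c : Σ i : Fin m, Fin (κ i), (pb κ x c).natDegree < k := by
    intro c; rw [pb_natDegree]; exact hdlt c
  have key : ∀ (c : Σ i : Fin m, Fin (κ i)) (jj : ℕ) (y : ℂ),
      ((theta ^ jj) (pb κ x c)).eval y
        = ∑ r ∈ range k, (pb κ x c).coeff r * (((r : ℕ) : ℂ) ^ jj * y ^ r) := by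
    intro c jj y
    conv_lhs => rw [Polynomial.as_sum_range' _ k (hpled c)]
    rw [map_sum, eval_finset_sum]
    refine Finset.sum_congr rfl fun r _ => ?_
    rw [← C_mul_X_pow_eq_monomial, ← smul_eq_C_mul, map_smul, theta_pow_X_pow]
    simp [smul_smul]
    ring
  have hAM : A * Mt = B := by
    ext c c'
    rw [Matrix.mul_apply]
    show (∑ r : Fin k, (pb κ x c).coeff r
        * (((r : ℕ) : ℂ) ^ (c'.2 : ℕ) * x c'.1 ^ (r : ℕ) / (Nat.factorial (c'.2 : ℕ) : ℂ)))
      = ((theta ^ (c'.2 : ℕ)) (pb κ x c)).eval (x c'.1) / (Nat.factorial (c'.2 : ℕ) : ℂ)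
    rw [key c (c'.2 : ℕ) (x c'.1), Finset.sum_div,
      ← Fin.sum_univ_eq_sum_range (fun r => (pb κ x c).coeff r
        * (((r : ℕ) : ℂ) ^ (c'.2 : ℕ) * x c'.1 ^ r) / (Nat.factorial (c'.2 : ℕ) : ℂ)) k]
    refine Finset.sum_congr rfl fun r _ => ?_
    ring
  -- relate to the goal matrix
  let Mg : Matrix (Fin k) (Fin k) ℂ := Matrix.of fun r c : Fin k =>
    ((r : ℕ) : ℂ) ^ (((e c).2 : ℕ)) * x (e c).1 ^ (r : ℕ) / (Nat.factorial ((e c).2 : ℕ) : ℂ)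
  let Asq : Matrix (Fin k) (Fin k) ℂ := A.submatrix (⇑e) id
  have h1 : Asq * Mg = B.submatrix (⇑e) (⇑e) := by
    ext i j
    show ∑ r, A (e i) r * Mt r (e j) = B (e i) (e j)
    rw [← Matrix.mul_apply, hAM]
  have h2 : Asq.det * Mg.det = B.det := by
    rw [← Matrix.det_mul, h1, Matrix.det_submatrix_equiv_self]
  -- determinant of Asq
  let π : Equiv.Perm (Fin k) := e.trans δ
  have hAsq : Asq = (A.submatrix (⇑δ.symm) id).submatrix (⇑π) id := by
    ext i j
    simp [Asq, π, Matrix.submatrix_apply]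
  have hA0 : (A.submatrix (⇑δ.symm) id).det = 1 := by
    have htri : (A.submatrix (⇑δ.symm) id).BlockTriangular OrderDual.toDual := by
      intro i j hij
      show (pb κ x (δ.symm i)).coeff j = 0
      apply coeff_eq_zero_of_natDegree_lt
      rw [pb_natDegree, hδs]
      exact hij
    rw [Matrix.det_of_lowerTriangular _ htri]
    refine Finset.prod_eq_one fun r _ => ?_
    show (pb κ x (δ.symm r)).coeff r = 1
    have hd : (pb κ x (δ.symm r)).natDegree = (r : ℕ) := by rw [pb_natDegree, hδs]
    rw [← hd]
    exact (pb_monic κ x (δ.symm r)).coeff_natDegree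
  have hdetAsq : Asq.det = ((Equiv.Perm.sign π : ℤ) : ℂ) := by
    rw [hAsq, Matrix.det_permute, hA0, mul_one]
  -- determinant of B
  have hBzero : ∀ c c' : Σ i : Fin m, Fin (κ i), dg κ c' < dg κ c → B c c' = 0 := by
    intro c c' hlt
    have hdvd : (X - C (x c'.1)) ^ ((c'.2 : ℕ) + 1) ∣ pb κ x c := by
      rcases lt_trichotomy c.1 c'.1 with hi | hi | hi
      · exact absurd (dg_mono κ (Or.inl hi)) (by omega)
      · have hs : ∑ l ∈ univ.filter (· < c.1), κ l = ∑ l ∈ univ.filter (· < c'.1), κ l := by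
          rw [hi]
        have h1' : dg κ c = (∑ l ∈ univ.filter (· < c.1), κ l) + (c.2 : ℕ) := rfl
        have h2' : dg κ c' = (∑ l ∈ univ.filter (· < c'.1), κ l) + (c'.2 : ℕ) := rfl
        have hj : (c'.2 : ℕ) + 1 ≤ (c.2 : ℕ) := by omega
        have hx : x c.1 = x c'.1 := by rw [hi]
        rw [pb, hx]
        exact dvd_mul_of_dvd_left (pow_dvd_pow _ hj) _
      · have hmem : c'.1 ∈ univ.filter (· < c.1) := by simp [hi]
        have hdG : (X - C (x c'.1)) ^ κ c'.1 ∣ G κ x c.1 :=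
          Finset.dvd_prod_of_mem _ hmem
        exact dvd_mul_of_dvd_right ((pow_dvd_pow _ c'.2.isLt).trans hdG) _
    show ((theta ^ (c'.2 : ℕ)) (pb κ x c)).eval (x c'.1) / (Nat.factorial (c'.2 : ℕ) : ℂ) = 0
    rw [eval_theta_pow_eq_zero hdvd, zero_div]
  have hBdet : B.det = ∏ c, B c c := by
    rw [← Matrix.det_submatrix_equiv_self δ.symm B]
    have htri : (B.submatrix (⇑δ.symm) (⇑δ.symm)).BlockTriangular id := by
      intro i j hij
      exact hBzero _ _ (by rw [hδs, hδs]; exact hij)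
    rw [Matrix.det_of_upperTriangular htri]
    exact Fintype.prod_equiv δ.symm _ _ fun r => rfl
  have hBdiag : ∀ c : Σ i : Fin m, Fin (κ i),
      B c c = x c.1 ^ (c.2 : ℕ) * ∏ l ∈ univ.filter (· < c.1), (x c.1 - x l) ^ κ l := by
    intro c
    show ((theta ^ (c.2 : ℕ)) (pb κ x c)).eval (x c.1) / (Nat.factorial (c.2 : ℕ) : ℂ) = _
    rw [pb, eval_theta_pow_diag]
    have hG : (G κ x c.1).eval (x c.1) = ∏ l ∈ univ.filter (· < c.1), (x c.1 - x l) ^ κ l := by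
      rw [G, eval_prod]
      simp
    rw [hG]
    have hf : (Nat.factorial (c.2 : ℕ) : ℂ) ≠ 0 := Nat.cast_ne_zero.2 (Nat.factorial_ne_zero _)
    field_simp
  have hprod : (∏ c : Σ i : Fin m, Fin (κ i), B c c)
      = (∏ i, x i ^ ((κ i).choose 2))
        * ∏ i, ∏ l ∈ univ.filter (· < i), (x i - x l) ^ (κ l * κ i) := by
    rw [← Finset.univ_sigma_univ, Finset.prod_sigma, ← Finset.prod_mul_distrib]
    refine Finset.prod_congr rfl fun i _ => ?_
    have : ∀ j : Fin (κ i), B ⟨i, j⟩ ⟨i, j⟩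
        = x i ^ (j : ℕ) * ∏ l ∈ univ.filter (· < i), (x i - x l) ^ κ l := fun j => hBdiag ⟨i, j⟩
    rw [Finset.prod_congr rfl fun j _ => this j, Finset.prod_mul_distrib,
      Finset.prod_const, Finset.prod_pow_eq_pow_sum]
    congr 1
    · congr 1
      rw [Fin.sum_univ_eq_sum_range (fun j => j) (κ i), Finset.sum_range_id,
        Nat.choose_two_right]
    · rw [← Finset.prod_pow]
      refine Finset.prod_congr rfl fun l _ => ?_
      rw [← pow_mul]
      simp [Finset.card_univ]
  have hpairs : (∏ pr ∈ univ.filter (fun pr : Fin m × Fin m => pr.1 < pr.2),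
        (x pr.2 - x pr.1) ^ (κ pr.1 * κ pr.2))
      = ∏ i, ∏ l ∈ univ.filter (· < i), (x i - x l) ^ (κ l * κ i) := by
    rw [Finset.prod_filter, ← Finset.univ_product_univ, Finset.prod_product, Finset.prod_comm]
    refine Finset.prod_congr rfl fun i _ => ?_
    rw [← Finset.prod_filter]
  set N : ℕ := ∑ pr ∈ univ.filter (fun pr : Fin m × Fin m => pr.1 < pr.2), κ pr.1 * κ pr.2
    with hNdef
  have hflip : (∏ pr ∈ univ.filter (fun pr : Fin m × Fin m => pr.1 < pr.2),
        (x pr.2 - x pr.1) ^ (κ pr.1 * κ pr.2))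
      = (-1 : ℂ) ^ N * ∏ pr ∈ univ.filter (fun pr : Fin m × Fin m => pr.1 < pr.2),
          (x pr.1 - x pr.2) ^ (κ pr.1 * κ pr.2) := by
    rw [hNdef, ← Finset.prod_pow_eq_pow_sum, ← Finset.prod_mul_distrib]
    refine Finset.prod_congr rfl fun pr _ => ?_
    rw [← neg_sub, neg_pow]
  have hBval : B.det = (-1 : ℂ) ^ N * ((∏ i, x i ^ ((κ i).choose 2))
      * ∏ pr ∈ univ.filter (fun pr : Fin m × Fin m => pr.1 < pr.2),
          (x pr.1 - x pr.2) ^ (κ pr.1 * κ pr.2)) := by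
    rw [hBdet, hprod, ← hpairs, hflip]
    ring
  -- assembly
  have hMgdet : Mg.det = ((Equiv.Perm.sign π : ℤ) : ℂ) * B.det := by
    rcases Int.units_eq_one_or (Equiv.Perm.sign π) with hsg | hsg <;>
      rw [hsg] at hdetAsq ⊢ <;> rw [hdetAsq] at h2 <;> push_cast at h2 ⊢
    · linear_combination h2
    · linear_combination -h2
  refine ⟨((Equiv.Perm.sign π : ℤ) : ℂ) * (-1 : ℂ) ^ N, ?_, ?_⟩
  · rcases Int.units_eq_one_or (Equiv.Perm.sign π) with hsg | hsg <;>
      rcases Nat.even_or_odd N with hN | hN <;>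
      rw [hsg] <;>
      [rw [hN.neg_one_pow]; rw [hN.neg_one_pow]; rw [hN.neg_one_pow]; rw [hN.neg_one_pow]] <;>
      norm_num
  · show Mg.det = _
    rw [hMgdet, hBval]
    ring
end

section
/- Let m ≥ 1, let α_1, …, α_m ∈ ℂ be nonzero, and let ℓ ≥ 1 be an integer such that α_1^ℓ, …, α_m^ℓ are pairwise distinct. Let g_1, …, g_m ∈ ℂ[X], let d_1, …, d_m ∈ ℕ with deg g_i ≤ d_i for each i, and set k := Σ_{i=1}^m (d_i + 1). If for some A ∈ ℕ we have Σ_{i=1}^m g_i(A + jℓ) · α_i^{A+jℓ} = 0 for every j ∈ {0, 1, …, k−1}, then g_i = 0 for every i. -/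
/-!
Write `u j = ∑ t, p_t(j) β_t ^ j`. The operator `u ↦ (j ↦ u (j + 1) - β_i u j)` acts on each
summand through its polynomial coefficient: it lowers the degree of `p_i`, does not raise the
others, and is injective on them because `β_t ≠ β_i`. It also turns `N` consecutive zeros of `u`
into `N - 1`, so induction on the total size `N` shows that all `p_t` with `t ≠ i` vanish and that
`p_i` is `1`-periodic, hence constant, hence zero as `u 0 = 0`. Progressions `A + jℓ` reduce to
`j` via `β_t = α_t ^ ℓ` and `p_t = α_t ^ A • g_t(A + ℓ X)`.
-/

open Polynomial Finset

namespace Polynomial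

variable {R : Type*}

section CommRing

variable [CommRing R]

theorem degree_taylor_one_sub_lt {p : R[X]} {n : ℕ} (hp : p.degree ≤ n) :
    (p.taylor 1 - p).degree < n := by
  rcases eq_or_ne p 0 with rfl | hp0
  · simp
  · refine (degree_sub_lt_left (degree_taylor p 1) ?_ (leadingCoeff_taylor ..)).trans_le ?_
    · rwa [Ne, taylor_eq_zero]
    · rwa [degree_taylor]

/-- If `u j = p(j) β ^ j`, then `u (j + 1) - b u j = (shiftSub b β p)(j) β ^ j`. -/
noncomputable def shiftSub (b β : R) (p : R[X]) : R[X] :=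
  β • p.taylor 1 - b • p

theorem eval_shiftSub (b β : R) (p : R[X]) (x : R) :
    (shiftSub b β p).eval x = β * p.eval (x + 1) - b * p.eval x := by
  simp [shiftSub, taylor_eval]

theorem degree_shiftSub_le (b β : R) (p : R[X]) : (shiftSub b β p).degree ≤ p.degree :=
  (degree_sub_le _ _).trans <| max_le ((degree_smul_le _ _).trans (degree_taylor p 1).le)
    (degree_smul_le _ _)

theorem shiftSub_self (β : R) (p : R[X]) : shiftSub β β p = β • (p.taylor 1 - p) :=
  (smul_sub β _ _).symm

theorem degree_shiftSub_self_lt (β : R) {p : R[X]} {n : ℕ} (hp : p.degree ≤ n) :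
    (shiftSub β β p).degree < n := by
  rw [shiftSub_self]
  exact (degree_smul_le _ _).trans_lt (degree_taylor_one_sub_lt hp)

end CommRing

section IsDomain

variable [CommRing R] [IsDomain R]

theorem eq_zero_of_shiftSub_eq_zero {b β : R} (hβ : β ≠ b) {p : R[X]}
    (h : shiftSub b β p = 0) : p = 0 := by
  have hlc := congrArg leadingCoeff (sub_eq_zero.mp h)
  simp only [smul_eq_C_mul, leadingCoeff_mul, leadingCoeff_C, leadingCoeff_taylor] at hlc
  exact leadingCoeff_eq_zero.mp <|
    (mul_eq_zero.mp (by linear_combination hlc : (β - b) * p.leadingCoeff = 0)).resolve_left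
      (sub_ne_zero.mpr hβ)

theorem eq_C_eval_zero_of_taylor_one_eq [CharZero R] {p : R[X]} (h : p.taylor 1 = p) :
    p = C (p.eval 0) := by
  have hnat (n : ℕ) : p.eval (n : R) = p.eval 0 := by
    induction n with
    | zero => simp
    | succ n ih => rw [Nat.cast_succ, ← taylor_eval, h, ih]
  refine sub_eq_zero.mp (eq_zero_of_infinite_isRoot _ ?_)
  refine (Set.infinite_range_of_injective Nat.cast_injective).mono ?_
  rintro _ ⟨n, rfl⟩
  simp [hnat]

end IsDomain

end Polynomial

section GenPowerSum

variable {R ι : Type*} [CommRing R]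

def genPowerSum (s : Finset ι) (β : ι → R) (p : ι → R[X]) (j : ℕ) : R :=
  ∑ t ∈ s, (p t).eval (j : R) * β t ^ j

theorem genPowerSum_shiftSub (s : Finset ι) (β : ι → R) (p : ι → R[X]) (b : R) (j : ℕ) :
    genPowerSum s β (fun t ↦ shiftSub b (β t) (p t)) j =
      genPowerSum s β p (j + 1) - b * genPowerSum s β p j := by
  simp only [genPowerSum, mul_sum, ← sum_sub_distrib]
  refine sum_congr rfl fun t _ ↦ ?_
  rw [eval_shiftSub, Nat.cast_succ]
  ring

theorem genPowerSum_comp_linear (s : Finset ι) (β : ι → R) (p : ι → R[X]) (ℓ A j : ℕ) :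
    genPowerSum s (fun t ↦ β t ^ ℓ)
        (fun t ↦ C (β t ^ A) * (p t).comp (C (ℓ : R) * X + C (A : R))) j =
      ∑ t ∈ s, (p t).eval ((A + j * ℓ : ℕ) : R) * β t ^ (A + j * ℓ) := by
  refine sum_congr rfl fun t _ ↦ ?_
  simp only [eval_mul, eval_C, eval_comp, eval_add, eval_X]
  rw [show (ℓ : R) * j + A = ((A + j * ℓ : ℕ) : R) by push_cast; ring]
  ring

theorem eq_zero_of_genPowerSum_eq_zero [IsDomain R] [CharZero R] {s : Finset ι} {β : ι → R}
    (hβ : ∀ t ∈ s, β t ≠ 0) (hinj : Set.InjOn β s) {p : ι → R[X]} {n : ι → ℕ}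
    (hdeg : ∀ t ∈ s, (p t).degree < n t)
    (hvan : ∀ j < ∑ t ∈ s, n t, genPowerSum s β p j = 0) : ∀ t ∈ s, p t = 0 := by
  classical
  obtain ⟨N, hN⟩ : ∃ N, ∑ t ∈ s, n t = N := ⟨_, rfl⟩
  induction N generalizing p n with
  | zero =>
    intro t ht
    have hnt : n t = 0 := sum_eq_zero_iff.mp hN t ht
    simpa [hnt, Nat.WithBot.lt_zero_iff] using hdeg t ht
  | succ N ih =>
    obtain ⟨i, hi, hni⟩ := exists_ne_zero_of_sum_ne_zero (s := s) (f := n) (by omega)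
    obtain ⟨n', hn'⟩ := Nat.exists_eq_succ_of_ne_zero hni
    set q : ι → R[X] := fun t ↦ shiftSub (β i) (β t) (p t)
    have hqdeg : ∀ t ∈ s, (q t).degree < Function.update n i n' t := by
      intro t ht
      rcases eq_or_ne t i with rfl | hti
      · rw [Function.update_self]
        have hpt := hdeg t ht
        rw [hn'] at hpt
        exact degree_shiftSub_self_lt _ (Order.le_of_lt_succ hpt)
      · rw [Function.update_of_ne hti]
        exact (degree_shiftSub_le _ _ _).trans_lt (hdeg t ht)
    have hqsum : ∑ t ∈ s, Function.update n i n' t = N := by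
      rw [sum_eq_add_sum_sdiff_singleton_of_mem hi, hn'] at hN
      rw [sum_update_of_mem hi]
      omega
    have hqvan : ∀ j < ∑ t ∈ s, Function.update n i n' t, genPowerSum s β q j = 0 := by
      intro j hj
      rw [genPowerSum_shiftSub, hvan (j + 1) (by omega), hvan j (by omega), mul_zero, sub_zero]
    have hq : ∀ t ∈ s, q t = 0 := ih hqdeg hqvan hqsum
    have hrest : ∀ t ∈ s, t ≠ i → p t = 0 := fun t ht hti ↦
      eq_zero_of_shiftSub_eq_zero (fun h ↦ hti (hinj ht hi h)) (hq t ht)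
    have hconst : p i = C ((p i).eval 0) := by
      refine eq_C_eval_zero_of_taylor_one_eq (sub_eq_zero.mp ?_)
      simpa [q, shiftSub_self, hβ i hi] using hq i hi
    have hval : (p i).eval 0 = 0 := by
      have h0 := hvan 0 (by omega)
      rw [genPowerSum, sum_eq_single_of_mem i hi fun t ht hti ↦ by simp [hrest t ht hti]] at h0
      simpa using h0
    intro t ht
    rcases eq_or_ne t i with rfl | hti
    · rw [hconst, hval, C_0]
    · exact hrest t ht hti

end GenPowerSum

theorem stmt6_general (m : ℕ) (α : Fin m → ℂ) (hα : ∀ i, α i ≠ 0)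
    (ℓ : ℕ) (hℓ : 1 ≤ ℓ) (hdist : Function.Injective fun i => α i ^ ℓ)
    (g : Fin m → Polynomial ℂ) (d : Fin m → ℕ) (hdeg : ∀ i, (g i).natDegree ≤ d i)
    (k : ℕ) (hk : k = ∑ i, (d i + 1)) (A : ℕ)
    (hvan : ∀ j < k, ∑ i, (g i).eval (((A + j * ℓ : ℕ) : ℂ)) * α i ^ (A + j * ℓ) = 0) :
    ∀ i, g i = 0 := by
  have hℓ0 : (ℓ : ℂ) ≠ 0 := by exact_mod_cast (by omega : ℓ ≠ 0)
  set q : ℂ[X] := C (ℓ : ℂ) * X + C (A : ℂ)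
  have hq : q.natDegree = 1 := natDegree_linear hℓ0
  have hzero := eq_zero_of_genPowerSum_eq_zero (s := univ) (β := fun i ↦ α i ^ ℓ)
    (p := fun i ↦ C (α i ^ A) * (g i).comp q) (n := fun i ↦ d i + 1)
    (fun i _ ↦ pow_ne_zero _ (hα i)) hdist.injOn
    (fun i _ ↦ by
      refine (degree_le_of_natDegree_le ?_).trans_lt (WithBot.coe_lt_coe.mpr (d i).lt_succ_self)
      refine (natDegree_C_mul_le _ _).trans ?_
      rw [natDegree_comp, hq, mul_one]
      exact hdeg i)
    (fun j hj ↦ (genPowerSum_comp_linear _ _ _ ℓ A j).trans (hvan j (hk ▸ hj)))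
  intro i
  have hcomp : (g i).comp q = 0 :=
    (mul_eq_zero.mp (hzero i (mem_univ i))).resolve_left (by simp [hα i])
  refine (comp_eq_zero_iff.mp hcomp).resolve_right fun ⟨_, hqC⟩ ↦ ?_
  have := congrArg natDegree hqC
  rw [hq, natDegree_C] at this
  exact one_ne_zero this

theorem stmt6 (m : ℕ) (hm : 1 ≤ m) (α : Fin m → ℂ) (hα : ∀ i, α i ≠ 0)
    (ℓ : ℕ) (hℓ : 1 ≤ ℓ) (hdist : Function.Injective fun i => α i ^ ℓ)
    (g : Fin m → Polynomial ℂ) (d : Fin m → ℕ) (hdeg : ∀ i, (g i).natDegree ≤ d i)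
    (k : ℕ) (hk : k = ∑ i, (d i + 1)) (A : ℕ)
    (hvan : ∀ j < k, ∑ i, (g i).eval (((A + j * ℓ : ℕ) : ℂ)) * α i ^ (A + j * ℓ) = 0) :
    ∀ i, g i = 0 :=
  stmt6_general m α hα ℓ hℓ hdist g d hdeg k hk A hvan
end

section
/- Let u : ℕ → ℤ be a linear division sequence and suppose that u_m = 0 for some integer m ≥ 1. Then there exists a nonempty finite set D of positive integers such that for every n ≥ 1: u_n = 0 if and only if d divides n for some d ∈ D. -/
/-- A linear division sequence: an integer sequence satisfying a linear recurrence
with `c k ≠ 0` which is also a division sequence. -/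
def IsLinearDivisionSequence (u : ℕ → ℤ) : Prop :=
  (∃ k : ℕ, 1 ≤ k ∧ ∃ c : ℕ → ℤ, c k ≠ 0 ∧
    ∀ n, k ≤ n → u n = ∑ i ∈ Finset.Icc 1 k, c i * u (n - i)) ∧
  (∀ m n : ℕ, 1 ≤ m → m ∣ n → u m ∣ u n)

/-!
Call a zero `n ≥ 1` of `u` primitive if no smaller zero divides it; since `u` is a division
sequence it suffices to show that all primitive zeros divide one fixed number.

Let `q` be a prime not dividing `c k`. Modulo `q` the shift
`(u n, …, u (n+k-1)) ↦ (u (n+1), …, u (n+k))` is an injective self-map of a finite set, hence a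
permutation, so all solutions of the recurrence share a period `Λ` modulo `q`; lifting,
`q ^ t * Λ` is a common period modulo `q ^ (t+1)`. If `n` is a primitive zero, periodicity and
Bézout give `q ^ (t+1) ∣ u (gcd n (q ^ t * Λ))`; for large `t` this forces
`u (gcd n (q ^ t * Λ)) = 0`, so `n ∣ q ^ t * Λ` by primitivity. Doing the same for a second
prime `q'` with period `Λ'` yields `n ∣ Λ * Λ'`.
-/

open Finset

theorem modEq_add_mul_of_forall_add_modEq {f : ℕ → ℤ} {N : ℤ} {p : ℕ}
    (h : ∀ n, f (n + p) ≡ f n [ZMOD N]) (n i : ℕ) : f (n + i * p) ≡ f n [ZMOD N] := by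
  induction i with
  | zero => simp
  | succ i ih => rw [add_mul, one_mul, ← add_assoc]; exact (h _).trans ih

theorem modEq_mod_of_forall_add_modEq {f : ℕ → ℤ} {N : ℤ} {p : ℕ}
    (h : ∀ n, f (n + p) ≡ f n [ZMOD N]) (n : ℕ) : f n ≡ f (n % p) [ZMOD N] := by
  conv_lhs => rw [← Nat.mod_add_div n p, mul_comm]
  exact modEq_add_mul_of_forall_add_modEq h _ _

namespace LinearRecurrence

variable {R : Type*}

theorem isSolution_mk_of_forall_eq_sum_Icc [CommSemiring R] {k : ℕ} {c u : ℕ → R}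
    (h : ∀ n, k ≤ n → u n = ∑ i ∈ Icc 1 k, c i * u (n - i)) :
    (⟨k, fun i => c (k - i)⟩ : LinearRecurrence R).IsSolution u := by
  intro n
  rw [h (n + k) (Nat.le_add_left k n),
    Fin.sum_univ_eq_sum_range (fun i => c (k - i) * u (n + i))]
  refine sum_nbij' (fun j => k - j) (fun i => k - i) ?_ ?_ ?_ ?_ ?_ <;>
    intro j hj <;> simp only [mem_Icc, mem_range] at hj ⊢
  · omega
  · omega
  · omega
  · omega
  · rw [Nat.sub_sub_self hj.2, Nat.add_sub_assoc hj.2]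

def map {S : Type*} [CommSemiring R] [CommSemiring S] (f : R →+* S) (E : LinearRecurrence R) :
    LinearRecurrence S :=
  ⟨E.order, f ∘ E.coeffs⟩

theorem IsSolution.map {S : Type*} [CommSemiring R] [CommSemiring S] (f : R →+* S)
    {E : LinearRecurrence R} {u : ℕ → R} (hu : E.IsSolution u) :
    (E.map f).IsSolution (f ∘ u) := by
  intro n
  show f (u (n + E.order)) = ∑ i : Fin E.order, f (E.coeffs i) * f (u (n + i))
  rw [hu n, map_sum]
  simp only [map_mul]

section CommRing

variable [CommRing R] {E : LinearRecurrence R} {u : ℕ → R}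

theorem IsSolution.shift (hu : E.IsSolution u) (p : ℕ) : E.IsSolution (fun n => u (n + p)) := by
  intro n
  simpa only [add_right_comm] using hu (n + p)

theorem IsSolution.tupleSucc_eq (hu : E.IsSolution u) (n : ℕ) :
    E.tupleSucc (fun i => u (n + i)) = fun i : Fin E.order => u (n + 1 + i) := by
  funext i
  simp only [tupleSucc, LinearMap.coe_mk, AddHom.coe_mk]
  split_ifs with h
  · rw [add_right_comm, add_assoc]
  · rw [show n + 1 + i = n + E.order by omega, hu n]

theorem IsSolution.iterate_tupleSucc_eq (hu : E.IsSolution u) (n p : ℕ) :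
    E.tupleSucc^[p] (fun i => u (n + i)) = fun i : Fin E.order => u (n + p + i) := by
  induction p with
  | zero => rfl
  | succ p ih => rw [Function.iterate_succ_apply', ih, hu.tupleSucc_eq, add_assoc]

theorem tupleSucc_injective (h : 0 < E.order) (hc : IsUnit (E.coeffs ⟨0, h⟩)) :
    Function.Injective E.tupleSucc := by
  refine (injective_iff_map_eq_zero E.tupleSucc).mpr fun x hx => ?_
  have hpos : ∀ j : Fin E.order, j.1 ≠ 0 → x j = 0 := by
    intro j hj
    have := congr_fun hx ⟨j - 1, by omega⟩
    simp only [tupleSucc, LinearMap.coe_mk, AddHom.coe_mk, Pi.zero_apply] at this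
    rwa [dif_pos (by omega), show (⟨j - 1 + 1, _⟩ : Fin E.order) = j from
      Fin.ext (Nat.sub_add_cancel (Nat.one_le_iff_ne_zero.mpr hj))] at this
  have hlast := congr_fun hx ⟨E.order - 1, by omega⟩
  simp only [tupleSucc, LinearMap.coe_mk, AddHom.coe_mk, Pi.zero_apply,
    dif_neg (show ¬(E.order - 1 + 1 < E.order) by omega)] at hlast
  rw [sum_eq_single (⟨0, h⟩ : Fin E.order)
    (fun j _ hj => by rw [hpos j (fun h0 => hj (Fin.ext h0)), mul_zero]) (by simp),
    hc.mul_right_eq_zero] at hlast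
  funext j
  by_cases hj : j.1 = 0
  · rwa [show j = ⟨0, h⟩ from Fin.ext hj]
  · exact hpos j hj

theorem exists_periodic_of_isUnit_coeffs [Finite R] (h : 0 < E.order)
    (hc : IsUnit (E.coeffs ⟨0, h⟩)) :
    ∃ p, 0 < p ∧ ∀ u, E.IsSolution u → Function.Periodic u p := by
  let σ := Equiv.ofBijective _ (Finite.injective_iff_bijective.mp (tupleSucc_injective h hc))
  refine ⟨orderOf σ, orderOf_pos σ, fun u hu n => ?_⟩
  have := congr_fun (hu.iterate_tupleSucc_eq n (orderOf σ)) ⟨0, h⟩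
  rwa [show E.tupleSucc^[orderOf σ] = ⇑(σ ^ orderOf σ) from (Equiv.Perm.coe_pow σ _).symm,
    pow_orderOf_eq_one, Equiv.Perm.coe_one, id, eq_comm] at this

end CommRing

theorem IsSolution.of_mul_left {E : LinearRecurrence ℤ} {N : ℤ} (hN : N ≠ 0) {w : ℕ → ℤ}
    (h : E.IsSolution fun n => N * w n) : E.IsSolution w := by
  intro n
  apply mul_left_cancel₀ hN
  refine (h n).trans ?_
  rw [mul_sum]
  exact sum_congr rfl fun i _ => mul_left_comm _ _ _

def IsPeriodMod (E : LinearRecurrence ℤ) (N : ℤ) (p : ℕ) : Prop :=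
  ∀ u, E.IsSolution u → ∀ n, u (n + p) ≡ u n [ZMOD N]

variable {E : LinearRecurrence ℤ}

theorem exists_isPeriodMod_prime (h : 0 < E.order) {q : ℕ} (hq : q.Prime)
    (hc : ¬(q : ℤ) ∣ E.coeffs ⟨0, h⟩) : ∃ p, 0 < p ∧ E.IsPeriodMod q p := by
  have := Fact.mk hq
  obtain ⟨p, hp, hper⟩ := (E.map (Int.castRingHom (ZMod q))).exists_periodic_of_isUnit_coeffs h
    (Ne.isUnit ((ZMod.intCast_zmod_eq_zero_iff_dvd _ _).not.mpr hc))
  exact ⟨p, hp, fun u hu n => (ZMod.intCast_eq_intCast_iff _ _ _).mp (hper _ (hu.map _) n)⟩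

theorem IsPeriodMod.of_dvd {N M : ℤ} {p : ℕ} (h : E.IsPeriodMod N p) (hMN : M ∣ N) :
    E.IsPeriodMod M p :=
  fun u hu n => (h u hu n).of_dvd hMN

theorem IsPeriodMod.modEq_mul_of_forall_dvd {N M : ℤ} {p : ℕ} (hM : E.IsPeriodMod M p)
    (hN : N ≠ 0) {d : ℕ → ℤ} (hd : E.IsSolution d) (hdN : ∀ n, N ∣ d n) (n : ℕ) :
    d (n + p) ≡ d n [ZMOD N * M] := by
  have hdw : d = fun n => N * (d n / N) := funext fun n => (Int.mul_ediv_cancel' (hdN n)).symm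
  rw [hdw] at hd ⊢
  exact (hM _ (hd.of_mul_left hN) n).mul_left'

/-- The differences `u (· + p) - u` are solutions divisible by `N`, so `p` is a period of them
modulo `N * M`; summing `M` of them gives `u (· + M * p) - u`. -/
theorem IsPeriodMod.mul {N : ℤ} {M p : ℕ} (hN : E.IsPeriodMod N p) (hM : E.IsPeriodMod M p)
    (hN0 : N ≠ 0) : E.IsPeriodMod (N * M) (M * p) := by
  intro u hu n
  set d : ℕ → ℤ := fun x => u (x + p) - u x
  have hd : E.IsSolution d := E.solSpace.sub_mem (x := fun x => u (x + p)) (hu.shift p) hu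
  have hdN : ∀ x, N ∣ d x := fun x => (hN u hu x).symm.dvd
  have hdper := hM.modEq_mul_of_forall_dvd hN0 hd hdN
  have htel : ∑ i ∈ range M, d (n + i * p) = u (n + M * p) - u n := by
    simpa [d, add_mul, add_assoc] using sum_range_sub (fun i => u (n + i * p)) M
  have hsum : ∑ i ∈ range M, d (n + i * p) ≡ ∑ _i ∈ range M, d n [ZMOD N * M] :=
    Int.ModEq.sum fun i _ => modEq_add_mul_of_forall_add_modEq hdper n i
  have hMd : ∑ _i ∈ range M, d n ≡ 0 [ZMOD N * M] := by
    rw [sum_const, card_range, nsmul_eq_mul, Int.modEq_zero_iff_dvd, mul_comm N]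
    exact mul_dvd_mul_left _ (hdN n)
  have hdvd := Int.modEq_zero_iff_dvd.mp (hsum.trans hMd)
  rw [htel] at hdvd
  exact (Int.modEq_iff_dvd.mpr hdvd).symm

theorem IsPeriodMod.pow_succ {q Λ : ℕ} (hΛ : E.IsPeriodMod q Λ) (hq : q ≠ 0) (t : ℕ) :
    E.IsPeriodMod ((q : ℤ) ^ (t + 1)) (q ^ t * Λ) := by
  induction t with
  | zero => simpa using hΛ
  | succ t ih =>
    have := ih.mul (ih.of_dvd (dvd_pow_self _ t.succ_ne_zero))
      (pow_ne_zero _ (by exact_mod_cast hq))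
    rwa [← _root_.pow_succ, ← mul_assoc, ← _root_.pow_succ'] at this

end LinearRecurrence

theorem dvd_apply_gcd_of_forall_add_modEq {u : ℕ → ℤ}
    (hdvd : ∀ m n : ℕ, 1 ≤ m → m ∣ n → u m ∣ u n) {N : ℤ} {p : ℕ} (hp : 0 < p)
    (hper : ∀ x, u (x + p) ≡ u x [ZMOD N]) {n : ℕ} (hn : 1 ≤ n) (hun : u n = 0) :
    N ∣ u (n.gcd p) := by
  obtain ⟨m, hm⟩ : ∃ m, n * m % p = n.gcd p % p := by
    rcases (Nat.le_of_dvd hp (Nat.gcd_dvd_right n p)).lt_or_eq with hlt | heq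
    · obtain ⟨m, -, hm⟩ := Nat.exists_mul_mod_eq_gcd hlt
      exact ⟨m, by rw [hm, Nat.mod_eq_of_lt hlt]⟩
    · exact ⟨0, by simp [heq]⟩
  have hum : u (n * m) = 0 := zero_dvd_iff.mp (hun ▸ hdvd n (n * m) hn (dvd_mul_right n m))
  have := (modEq_mod_of_forall_add_modEq hper _).trans
    (hm ▸ (modEq_mod_of_forall_add_modEq hper (n * m)).symm)
  rwa [hum, Int.modEq_zero_iff_dvd] at this

def IsPrimitiveZero (u : ℕ → ℤ) (n : ℕ) : Prop :=
  0 < n ∧ u n = 0 ∧ ∀ d, 0 < d → d ∣ n → u d = 0 → d = n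

theorem exists_isPrimitiveZero_dvd {u : ℕ → ℤ} {n : ℕ} (hn : 0 < n) (hun : u n = 0) :
    ∃ d, d ∣ n ∧ IsPrimitiveZero u d := by
  classical
  have hex : ∃ d, 0 < d ∧ d ∣ n ∧ u d = 0 := ⟨n, hn, dvd_rfl, hun⟩
  obtain ⟨hd, hdn, hud⟩ := Nat.find_spec hex
  exact ⟨Nat.find hex, hdn, hd, hud, fun e he hed hue =>
    le_antisymm (Nat.le_of_dvd hd hed) (Nat.find_min' hex ⟨he, hed.trans hdn, hue⟩)⟩

theorem IsPrimitiveZero.exists_dvd_pow_mul {u : ℕ → ℤ}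
    (hdvd : ∀ m n : ℕ, 1 ≤ m → m ∣ n → u m ∣ u n) {n : ℕ} (hn : IsPrimitiveZero u n)
    {q Λ : ℕ} (hq : 1 < q) (hΛ : 0 < Λ)
    (hper : ∀ t x, u (x + q ^ t * Λ) ≡ u x [ZMOD q ^ (t + 1)]) :
    ∃ t, n ∣ q ^ t * Λ := by
  obtain ⟨hn0, hun, hmin⟩ := hn
  set S := ∑ d ∈ n.divisors, (u d).natAbs
  have hgn : n.gcd (q ^ S * Λ) ∣ n := Nat.gcd_dvd_left _ _
  have hdvd_u : (q : ℤ) ^ (S + 1) ∣ u (n.gcd (q ^ S * Λ)) :=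
    dvd_apply_gcd_of_forall_add_modEq hdvd (by positivity) (hper S) hn0 hun
  -- `S` bounds `|u|` on the divisors of `n`, while `q ^ (S + 1)` divides `u` at the gcd
  have hug : u (n.gcd (q ^ S * Λ)) = 0 := by
    refine Int.eq_zero_of_dvd_of_natAbs_lt_natAbs hdvd_u ?_
    calc (u (n.gcd (q ^ S * Λ))).natAbs ≤ S :=
          single_le_sum (f := fun d => (u d).natAbs) (fun _ _ => Nat.zero_le _)
            (Nat.mem_divisors.mpr ⟨hgn, hn0.ne'⟩)
      _ < q ^ (S + 1) := (Nat.lt_succ_self S).trans (Nat.lt_pow_self hq)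
      _ = ((q : ℤ) ^ (S + 1)).natAbs := by simp
  exact ⟨S, hmin _ (Nat.gcd_pos_of_pos_left _ hn0) hgn hug ▸ Nat.gcd_dvd_right _ _⟩

theorem LinearRecurrence.IsSolution.exists_forall_isPrimitiveZero_dvd_pow_mul
    {E : LinearRecurrence ℤ} {u : ℕ → ℤ} (hu : E.IsSolution u) (h : 0 < E.order) {q : ℕ}
    (hq : q.Prime) (hc : ¬(q : ℤ) ∣ E.coeffs ⟨0, h⟩)
    (hdvd : ∀ m n : ℕ, 1 ≤ m → m ∣ n → u m ∣ u n) :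
    ∃ Λ, 0 < Λ ∧ ∀ n, IsPrimitiveZero u n → ∃ t, n ∣ q ^ t * Λ := by
  obtain ⟨Λ, hΛ, hper⟩ := LinearRecurrence.exists_isPeriodMod_prime h hq hc
  exact ⟨Λ, hΛ, fun n hn => hn.exists_dvd_pow_mul hdvd hq.one_lt hΛ
    fun t => hper.pow_succ hq.ne_zero t u hu⟩

theorem exists_prime_not_dvd {c : ℤ} (hc : c ≠ 0) (N : ℕ) :
    ∃ q, N ≤ q ∧ q.Prime ∧ ¬(q : ℤ) ∣ c := by
  obtain ⟨q, hq, hqp⟩ := Nat.exists_infinite_primes (N + c.natAbs + 1)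
  exact ⟨q, by omega, hqp, fun hdvd =>
    hc (Int.eq_zero_of_dvd_of_natAbs_lt_natAbs hdvd (by rw [Int.natAbs_natCast]; omega))⟩

theorem dvd_mul_of_dvd_pow_mul_of_dvd_pow_mul {n q q' a b Λ Λ' : ℕ} (hqq' : q.Coprime q')
    (h : n ∣ q ^ a * Λ) (h' : n ∣ q' ^ b * Λ') : n ∣ Λ * Λ' := by
  have h₁ : n ∣ Λ * Λ' * q ^ a := (h.trans (dvd_mul_right _ Λ')).trans (dvd_of_eq (by ring))
  have h₂ : n ∣ Λ * Λ' * q' ^ b := (h'.trans (dvd_mul_right _ Λ)).trans (dvd_of_eq (by ring))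
  have := Nat.dvd_gcd h₁ h₂
  rwa [Nat.gcd_mul_left, Nat.Coprime.gcd_eq_one (hqq'.pow a b), mul_one] at this

theorem exists_finset_zero_iff_of_forall_isPrimitiveZero_dvd {u : ℕ → ℤ}
    (hdvd : ∀ m n : ℕ, 1 ≤ m → m ∣ n → u m ∣ u n) {B : ℕ} (hB : B ≠ 0)
    (hprim : ∀ n, IsPrimitiveZero u n → n ∣ B) {m : ℕ} (hm : 1 ≤ m) (hum : u m = 0) :
    ∃ D : Finset ℕ, D.Nonempty ∧ (∀ d ∈ D, 0 < d) ∧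
      ∀ n : ℕ, 1 ≤ n → (u n = 0 ↔ ∃ d ∈ D, d ∣ n) := by
  have hmem : ∀ {d}, IsPrimitiveZero u d → d ∈ B.divisors.filter (u · = 0) := fun hd =>
    mem_filter.mpr ⟨Nat.mem_divisors.mpr ⟨hprim _ hd, hB⟩, hd.2.1⟩
  refine ⟨B.divisors.filter (u · = 0), ?_,
    fun d hd => Nat.pos_of_mem_divisors (mem_filter.mp hd).1, fun n hn => ⟨fun hun => ?_, ?_⟩⟩
  · obtain ⟨d, -, hd⟩ := exists_isPrimitiveZero_dvd hm hum
    exact ⟨d, hmem hd⟩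
  · obtain ⟨d, hdn, hd⟩ := exists_isPrimitiveZero_dvd hn hun
    exact ⟨d, hmem hd, hdn⟩
  · rintro ⟨d, hd, hdn⟩
    obtain ⟨hdB, hud⟩ := mem_filter.mp hd
    exact zero_dvd_iff.mp (hud ▸ hdvd d n (Nat.pos_of_mem_divisors hdB) hdn)

theorem stmt7 (u : ℕ → ℤ) (hu : IsLinearDivisionSequence u)
    (m : ℕ) (hm : 1 ≤ m) (hum : u m = 0) :
    ∃ D : Finset ℕ, D.Nonempty ∧ (∀ d ∈ D, 0 < d) ∧
      ∀ n : ℕ, 1 ≤ n → (u n = 0 ↔ ∃ d ∈ D, d ∣ n) := by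
  obtain ⟨⟨k, hk, c, hck, hrec⟩, hdvd⟩ := hu
  have hE := LinearRecurrence.isSolution_mk_of_forall_eq_sum_Icc hrec
  obtain ⟨q, -, hq, hqc⟩ := exists_prime_not_dvd hck 0
  obtain ⟨q', hqq', hq', hq'c⟩ := exists_prime_not_dvd hck (q + 1)
  obtain ⟨Λ, hΛ, hΛdvd⟩ := hE.exists_forall_isPrimitiveZero_dvd_pow_mul hk hq hqc hdvd
  obtain ⟨Λ', hΛ', hΛ'dvd⟩ := hE.exists_forall_isPrimitiveZero_dvd_pow_mul hk hq' hq'c hdvd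
  refine exists_finset_zero_iff_of_forall_isPrimitiveZero_dvd hdvd
    (Nat.mul_ne_zero hΛ.ne' hΛ'.ne') (fun n hn => ?_) hm hum
  obtain ⟨a, ha⟩ := hΛdvd n hn
  obtain ⟨b, hb⟩ := hΛ'dvd n hn
  exact dvd_mul_of_dvd_pow_mul_of_dvd_pow_mul ((Nat.coprime_primes hq hq').mpr (by omega)) ha hb
end

section
/- Let f ∈ ℂ[X] with f(0) ≠ 0. Then f(X^m) divides f(X^n) in ℂ[X] for all positive integers m, n with m dividing n, if and only if there exist a finite set S of positive integers and natural numbers h_m for m ∈ S such that f is associated in ℂ[X] (equal up to a nonzero constant factor) to lcm_{m ∈ S} (X^m − 1)^{h_m}, the least common multiple being taken in ℂ[X]. -/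
open Polynomial

namespace Stmt8Aux

variable {p q : Polynomial ℂ}

lemma rm_le_of_dvd (h : p ∣ q) (hq : q ≠ 0) (a : ℂ) :
    rootMultiplicity a p ≤ rootMultiplicity a q := by
  rw [le_rootMultiplicity_iff hq]
  exact (pow_rootMultiplicity_dvd p a).trans h

lemma rm_eq_of_associated (h : Associated p q) (hp : p ≠ 0) (a : ℂ) :
    rootMultiplicity a p = rootMultiplicity a q := by
  have hq : q ≠ 0 := fun h0 => hp (by simpa [h0] using (associated_zero_iff_eq_zero p).mp (h0 ▸ h))
  exact le_antisymm (rm_le_of_dvd h.dvd hq a) (rm_le_of_dvd h.symm.dvd hp a)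

lemma dvd_iff_rm (hp : p ≠ 0) (hq : q ≠ 0) :
    p ∣ q ↔ ∀ a : ℂ, rootMultiplicity a p ≤ rootMultiplicity a q := by
  classical
  rw [Splits.dvd_iff_roots_le_roots (IsAlgClosed.splits p) hp hq,
    Multiset.le_iff_count]
  simp only [count_roots]

lemma rm_pow (hp : p ≠ 0) (k : ℕ) (a : ℂ) :
    rootMultiplicity a (p ^ k) = k * rootMultiplicity a p := by
  induction k with
  | zero => simp [rootMultiplicity_eq_zero, IsRoot]
  | succ n ih =>
      rw [pow_succ, rootMultiplicity_mul (mul_ne_zero (pow_ne_zero _ hp) hp), ih]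
      ring

lemma rm_lcm (hp : p ≠ 0) (hq : q ≠ 0) (a : ℂ) :
    rootMultiplicity a (lcm p q) = max (rootMultiplicity a p) (rootMultiplicity a q) := by
  have hl : lcm p q ≠ 0 := by
    simp [lcm_eq_zero_iff, hp, hq]
  have hg : gcd p q ≠ 0 := fun h0 => hp ((gcd_eq_zero_iff p q).mp h0).1
  have hge : max (rootMultiplicity a p) (rootMultiplicity a q) ≤
      rootMultiplicity a (lcm p q) :=
    max_le (rm_le_of_dvd (dvd_lcm_left p q) hl a) (rm_le_of_dvd (dvd_lcm_right p q) hl a)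
  have hsum : rootMultiplicity a (gcd p q) + rootMultiplicity a (lcm p q)
      = rootMultiplicity a p + rootMultiplicity a q := by
    rw [← rootMultiplicity_mul (mul_ne_zero hg hl),
      rm_eq_of_associated (gcd_mul_lcm p q) (mul_ne_zero hg hl),
      rootMultiplicity_mul (mul_ne_zero hp hq)]
  have hmin : min (rootMultiplicity a p) (rootMultiplicity a q)
      ≤ rootMultiplicity a (gcd p q) := by
    rw [le_rootMultiplicity_iff hg]
    exact dvd_gcd ((pow_dvd_pow _ (min_le_left _ _)).trans (pow_rootMultiplicity_dvd p a))
      ((pow_dvd_pow _ (min_le_right _ _)).trans (pow_rootMultiplicity_dvd q a))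
  omega

end Stmt8Aux
open Polynomial
namespace Stmt8Aux2

lemma rm_X_pow_sub_one {m : ℕ} (hm : 0 < m) (a : ℂ) :
    rootMultiplicity a ((X : Polynomial ℂ) ^ m - 1) = if a ^ m = 1 then 1 else 0 := by
  classical
  have hne : ((X : Polynomial ℂ) ^ m - 1) ≠ 0 := by
    simpa using X_pow_sub_C_ne_zero hm (1 : ℂ)
  have hsep : Separable ((X : Polynomial ℂ) ^ m - 1) := by
    simpa using separable_X_pow_sub_C (1 : ℂ) (by exact_mod_cast hm.ne') one_ne_zero
  have hnodup := nodup_roots hsep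
  rw [← count_roots]
  split_ifs with h
  · have hmem : a ∈ ((X : Polynomial ℂ) ^ m - 1).roots := by
      rw [mem_roots hne]
      simp [IsRoot, h]
    exact le_antisymm (Multiset.nodup_iff_count_le_one.mp hnodup a)
      (Multiset.one_le_count_iff_mem.mpr hmem)
  · rw [Multiset.count_eq_zero]
    intro hmem
    rw [mem_roots hne] at hmem
    apply h
    have := hmem
    simp only [IsRoot, eval_sub, eval_pow, eval_X, eval_one, sub_eq_zero] at this
    exact this

lemma comp_X_pow_ne_zero {f : Polynomial ℂ} (hf : f ≠ 0) {n : ℕ} (hn : 0 < n) :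
    f.comp ((X : Polynomial ℂ) ^ n) ≠ 0 := by
  intro h
  have := natDegree_comp (p := f) (q := (X : Polynomial ℂ) ^ n)
  rcases eq_or_ne f.natDegree 0 with hd | hd
  · obtain ⟨c, rfl⟩ := natDegree_eq_zero.mp hd
    simp only [C_comp] at h
    exact hf (by rw [C_eq_zero.mp h, map_zero])
  · rw [h] at this
    simp [natDegree_X_pow] at this
    omega

lemma rm_comp {f : Polynomial ℂ} (hf : f ≠ 0) {a : ℂ} (ha : a ≠ 0) {n : ℕ} (hn : 0 < n) :
    rootMultiplicity a (f.comp ((X : Polynomial ℂ) ^ n)) = rootMultiplicity (a ^ n) f := by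
  classical
  set k := rootMultiplicity (a ^ n) f with hk
  set g := f /ₘ (X - C (a ^ n)) ^ k with hg
  have hdecomp : (X - C (a ^ n)) ^ k * g = f := pow_mul_divByMonic_rootMultiplicity_eq f (a ^ n)
  have hgeval : g.eval (a ^ n) ≠ 0 := eval_divByMonic_pow_rootMultiplicity_ne_zero (a ^ n) hf
  have hgne : g ≠ 0 := fun h0 => hgeval (by simp [h0])
  have hXa : rootMultiplicity a ((X : Polynomial ℂ) ^ n - C (a ^ n)) = 1 := by
    have hne : ((X : Polynomial ℂ) ^ n - C (a ^ n)) ≠ 0 := X_pow_sub_C_ne_zero hn _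
    have hsep : Separable ((X : Polynomial ℂ) ^ n - C (a ^ n)) :=
      separable_X_pow_sub_C (a ^ n) (by exact_mod_cast hn.ne') (pow_ne_zero n ha)
    rw [← count_roots]
    refine le_antisymm (Multiset.nodup_iff_count_le_one.mp (nodup_roots hsep) a)
      (Multiset.one_le_count_iff_mem.mpr ?_)
    rw [mem_roots hne]
    simp [IsRoot]
  have hgcomp : (g.comp ((X : Polynomial ℂ) ^ n)).eval a ≠ 0 := by
    rw [eval_comp]; simpa using hgeval
  have hgcompne : g.comp ((X : Polynomial ℂ) ^ n) ≠ 0 := fun h0 => hgcomp (by simp [h0])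
  have hXcompne : (((X : Polynomial ℂ) ^ n - C (a ^ n)) ^ k) ≠ 0 :=
    pow_ne_zero _ (X_pow_sub_C_ne_zero hn _)
  calc rootMultiplicity a (f.comp ((X : Polynomial ℂ) ^ n))
      = rootMultiplicity a ((((X - C (a ^ n)) ^ k) * g).comp ((X : Polynomial ℂ) ^ n)) := by
        rw [hdecomp]
    _ = rootMultiplicity a ((((X : Polynomial ℂ) ^ n - C (a ^ n)) ^ k) *
          g.comp ((X : Polynomial ℂ) ^ n)) := by
        rw [mul_comp, pow_comp, sub_comp, X_comp, C_comp]
    _ = k * 1 + 0 := by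
        rw [rootMultiplicity_mul (mul_ne_zero hXcompne hgcompne),
          Stmt8Aux.rm_pow (X_pow_sub_C_ne_zero hn _) k, hXa,
          rootMultiplicity_eq_zero hgcomp]
    _ = k := by ring

end Stmt8Aux2
namespace Stmt8Aux3
open Polynomial

lemma lcm_ne_zero {S : Finset ℕ} {g : ℕ → Polynomial ℂ} (hg : ∀ m ∈ S, g m ≠ 0) :
    S.lcm g ≠ 0 := by
  classical
  induction S using Finset.induction_on with
  | empty => simp [Finset.lcm_empty]
  | @insert b s hx ih =>

      rw [Finset.lcm_insert]
      rw [Ne, lcm_eq_zero_iff]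
      push_neg
      exact ⟨hg b (Finset.mem_insert_self b s), ih fun m hm => hg m (Finset.mem_insert_of_mem hm)⟩

lemma rm_one (a : ℂ) : rootMultiplicity a (1 : Polynomial ℂ) = 0 :=
  rootMultiplicity_eq_zero (by simp [IsRoot])

lemma rm_finset_lcm {S : Finset ℕ} {g : ℕ → Polynomial ℂ} (hg : ∀ m ∈ S, g m ≠ 0) (a : ℂ) :
    rootMultiplicity a (S.lcm g) = S.sup fun m => rootMultiplicity a (g m) := by
  classical
  induction S using Finset.induction_on with
  | empty => simp [Finset.lcm_empty, rm_one]
  | @insert b s hx ih =>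

      have hgb : g b ≠ 0 := hg b (Finset.mem_insert_self b s)
      have hgs : ∀ m ∈ s, g m ≠ 0 := fun m hm => hg m (Finset.mem_insert_of_mem hm)
      rw [Finset.lcm_insert, Finset.sup_insert,
        Stmt8Aux.rm_lcm hgb (lcm_ne_zero hgs) a, ih hgs]

end Stmt8Aux3
namespace Stmt8Aux4
open Polynomial Stmt8Aux Stmt8Aux2 Stmt8Aux3

variable {f : Polynomial ℂ}

def Cond (f : Polynomial ℂ) : Prop :=
  ∀ (a : ℂ) (k : ℕ), 0 < k → rootMultiplicity a f ≤ rootMultiplicity (a ^ k) f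

lemma f_ne_zero (hf0 : f.eval 0 ≠ 0) : f ≠ 0 := fun h => hf0 (by simp [h])

lemma lhs_to_cond (hf0 : f.eval 0 ≠ 0)
    (H : ∀ m n : ℕ, 0 < m → 0 < n → m ∣ n →
        f.comp (X ^ m) ∣ f.comp (X ^ n)) : Cond f := by
  intro a k hk
  have hf := f_ne_zero hf0
  rcases eq_or_ne a 0 with rfl | ha
  · rw [rootMultiplicity_eq_zero (by simpa [IsRoot] using hf0)]
    exact Nat.zero_le _
  · have hdvd := H 1 k one_pos hk (one_dvd k)
    rw [pow_one, comp_X] at hdvd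
    have := rm_le_of_dvd hdvd (comp_X_pow_ne_zero hf hk) a
    rwa [rm_comp hf ha hk] at this

lemma cond_to_lhs (hf0 : f.eval 0 ≠ 0) (hc : Cond f) :
    ∀ m n : ℕ, 0 < m → 0 < n → m ∣ n →
        f.comp (X ^ m) ∣ f.comp (X ^ n) := by
  intro m n hm hn hmn
  obtain ⟨c, rfl⟩ := hmn
  have hf := f_ne_zero hf0
  have hc0 : 0 < c := by
    rcases Nat.eq_zero_or_pos c with rfl | h
    · omega
    · exact h
  rw [dvd_iff_rm (comp_X_pow_ne_zero hf hm) (comp_X_pow_ne_zero hf hn)]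
  intro a
  rcases eq_or_ne a 0 with rfl | ha
  · rw [rootMultiplicity_eq_zero (p := f.comp (X ^ m))
      (by simp [IsRoot, eval_comp, zero_pow hm.ne'] ; exact hf0)]
    exact Nat.zero_le _
  · rw [rm_comp hf ha hm, rm_comp hf ha hn, pow_mul]
    exact hc (a ^ m) c hc0

lemma rhs_to_cond (hf0 : f.eval 0 ≠ 0)
    {S : Finset ℕ} (hS : ∀ m ∈ S, 0 < m) {h : ℕ → ℕ}
    (hassoc : Associated f (S.lcm fun m => ((X : Polynomial ℂ) ^ m - 1) ^ (h m))) :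
    Cond f := by
  have hf := f_ne_zero hf0
  set g : ℕ → Polynomial ℂ := fun m => ((X : Polynomial ℂ) ^ m - 1) ^ (h m) with hgdef
  have hgne : ∀ m ∈ S, g m ≠ 0 := fun m hm =>
    pow_ne_zero _ (by simpa using X_pow_sub_C_ne_zero (hS m hm) (1 : ℂ))
  have hLne : S.lcm g ≠ 0 := lcm_ne_zero hgne
  intro a k hk
  rw [rm_eq_of_associated hassoc hf a, rm_eq_of_associated hassoc hf (a ^ k),
    rm_finset_lcm hgne a]
  apply Finset.sup_le
  intro m hm
  have hm0 := hS m hm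
  have hXm : ((X : Polynomial ℂ) ^ m - 1) ≠ 0 := by
    simpa using X_pow_sub_C_ne_zero hm0 (1 : ℂ)
  refine le_trans ?_ (rm_le_of_dvd (Finset.dvd_lcm hm) hLne (a ^ k))
  rw [hgdef]
  simp only
  rw [rm_pow hXm, rm_pow hXm, rm_X_pow_sub_one hm0, rm_X_pow_sub_one hm0]
  rcases eq_or_ne (a ^ m) 1 with h1 | h1
  · have : (a ^ k) ^ m = 1 := by
      rw [← pow_mul, mul_comm, pow_mul, h1, one_pow]
    simp [h1, this]
  · simp [h1]

end Stmt8Aux4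
namespace Stmt8Aux5
open Polynomial Stmt8Aux Stmt8Aux2 Stmt8Aux3 Stmt8Aux4

variable {f : Polynomial ℂ}

lemma root_finorder (hf0 : f.eval 0 ≠ 0) (hc : Cond f) {a : ℂ} (ha : f.IsRoot a) :
    IsOfFinOrder a := by
  classical
  have hf := f_ne_zero hf0
  have ha0 : a ≠ 0 := fun h => hf0 (by simpa [h] using ha)
  have hpow : ∀ k : ℕ, 0 < k → f.IsRoot (a ^ k) := by
    intro k hk
    have h1 : 0 < rootMultiplicity a f := (rootMultiplicity_pos hf).mpr ha
    have := hc a k hk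
    exact (rootMultiplicity_pos hf).mp (by omega)
  set F : ℕ → f.roots.toFinset := fun i =>
    ⟨a ^ (i + 1), by
      rw [Multiset.mem_toFinset, mem_roots hf]
      exact hpow (i + 1) (Nat.succ_pos i)⟩ with hF
  obtain ⟨i, j, hij, hFij⟩ := Finite.exists_ne_map_eq_of_infinite F
  wlog hlt : i < j generalizing i j
  · exact this j i hij.symm hFij.symm (by omega)
  have heq : a ^ (i + 1) = a ^ (j + 1) := congrArg Subtype.val hFij
  have : a ^ (i + 1) * a ^ (j - i) = a ^ (i + 1) * 1 := by
    rw [mul_one, ← pow_add]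
    rw [heq]
    congr 1
    omega
  have hone : a ^ (j - i) = 1 := mul_left_cancel₀ (pow_ne_zero _ ha0) this
  exact isOfFinOrder_iff_pow_eq_one.mpr ⟨j - i, by omega, hone⟩

lemma cond_to_rhs (hf0 : f.eval 0 ≠ 0) (hc : Cond f) :
    ∃ S : Finset ℕ, (∀ m ∈ S, 0 < m) ∧ ∃ h : ℕ → ℕ,
      Associated f (S.lcm fun m => ((X : Polynomial ℂ) ^ m - 1) ^ (h m)) := by
  classical
  have hf := f_ne_zero hf0
  set R := f.roots.toFinset with hR
  have hmemR : ∀ b : ℂ, b ∈ R ↔ f.IsRoot b := by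
    intro b; rw [hR, Multiset.mem_toFinset, mem_roots hf]
  refine ⟨R.image orderOf, ?_, fun m => (R.filter (fun b => orderOf b = m)).sup
      (fun b => rootMultiplicity b f), ?_⟩
  · intro m hm
    obtain ⟨b, hb, rfl⟩ := Finset.mem_image.mp hm
    exact (orderOf_pos_iff).mpr (root_finorder hf0 hc ((hmemR b).mp hb))
  set S := R.image orderOf with hSdef
  set h : ℕ → ℕ := fun m => (R.filter (fun b => orderOf b = m)).sup
      (fun b => rootMultiplicity b f) with hhdef
  set g : ℕ → Polynomial ℂ := fun m => ((X : Polynomial ℂ) ^ m - 1) ^ (h m) with hgdef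
  have hSpos : ∀ m ∈ S, 0 < m := by
    intro m hm
    obtain ⟨b, hb, rfl⟩ := Finset.mem_image.mp hm
    exact (orderOf_pos_iff).mpr (root_finorder hf0 hc ((hmemR b).mp hb))
  have hgne : ∀ m ∈ S, g m ≠ 0 := fun m hm =>
    pow_ne_zero _ (by simpa using X_pow_sub_C_ne_zero (hSpos m hm) (1 : ℂ))
  have hLne : S.lcm g ≠ 0 := lcm_ne_zero hgne
  -- key: root multiplicities agree everywhere
  have key : ∀ x : ℂ, rootMultiplicity x (S.lcm g) = rootMultiplicity x f := by
    intro x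
    apply le_antisymm
    · rw [rm_finset_lcm hgne x]
      apply Finset.sup_le
      intro m hm
      have hm0 := hSpos m hm
      have hXm : ((X : Polynomial ℂ) ^ m - 1) ≠ 0 := by
        simpa using X_pow_sub_C_ne_zero hm0 (1 : ℂ)
      rw [hgdef]
      simp only
      rw [rm_pow hXm, rm_X_pow_sub_one hm0]
      rcases eq_or_ne (x ^ m) 1 with h1 | h1
      · rw [if_pos h1, mul_one]
        apply Finset.sup_le
        intro b hb
        obtain ⟨hbR, hbord⟩ := Finset.mem_filter.mp hb
        have hbroot := (hmemR b).mp hbR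
        have hbfin := root_finorder hf0 hc hbroot
        haveI : NeZero m := ⟨hm0.ne'⟩
        have hprim : IsPrimitiveRoot b m := hbord ▸ IsPrimitiveRoot.orderOf b
        obtain ⟨i, hik, hbi⟩ := hprim.eq_pow_of_pow_eq_one h1
        rcases Nat.eq_zero_or_pos i with rfl | hi
        · -- x = 1 = b ^ m
          have hx1 : x = 1 := by simpa using hbi.symm
          have : b ^ m = x := by rw [hx1, ← hbord]; exact pow_orderOf_eq_one b
          exact this ▸ hc b m hm0
        · exact hbi ▸ hc b i hi
      · simp [h1]
    · rcases Nat.eq_zero_or_pos (rootMultiplicity x f) with h0 | hpos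
      · omega
      · have hxroot : f.IsRoot x := (rootMultiplicity_pos hf).mp hpos
        have hxR : x ∈ R := (hmemR x).mpr hxroot
        set d := orderOf x with hd
        have hd0 : 0 < d := (orderOf_pos_iff).mpr (root_finorder hf0 hc hxroot)
        have hdS : d ∈ S := Finset.mem_image.mpr ⟨x, hxR, rfl⟩
        have hXd : ((X : Polynomial ℂ) ^ d - 1) ≠ 0 := by
          simpa using X_pow_sub_C_ne_zero hd0 (1 : ℂ)
        have hmemfil : x ∈ R.filter (fun b => orderOf b = d) :=
          Finset.mem_filter.mpr ⟨hxR, rfl⟩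
        have hle1 : rootMultiplicity x f ≤ h d :=
          Finset.le_sup (f := fun b => rootMultiplicity b f) hmemfil
        have hle2 : h d = rootMultiplicity x (g d) := by
          rw [hgdef]
          simp only
          rw [rm_pow hXd, rm_X_pow_sub_one hd0, if_pos (pow_orderOf_eq_one x), mul_one]
        calc rootMultiplicity x f ≤ rootMultiplicity x (g d) := hle2 ▸ hle1
          _ ≤ rootMultiplicity x (S.lcm g) := rm_le_of_dvd (Finset.dvd_lcm hdS) hLne x
  refine Associated.symm (associated_of_dvd_dvd ?_ ?_)
  · rw [dvd_iff_rm hLne hf]; intro a; rw [key a]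
  · rw [dvd_iff_rm hf hLne]; intro a; rw [key a]

end Stmt8Aux5

theorem stmt8 (f : Polynomial ℂ) (hf0 : f.eval 0 ≠ 0) :
    (∀ m n : ℕ, 0 < m → 0 < n → m ∣ n →
        f.comp (Polynomial.X ^ m) ∣ f.comp (Polynomial.X ^ n)) ↔
    ∃ S : Finset ℕ, (∀ m ∈ S, 0 < m) ∧ ∃ h : ℕ → ℕ,
      Associated f (S.lcm fun m => ((Polynomial.X : Polynomial ℂ) ^ m - 1) ^ (h m)) := by
  constructor
  · intro H
    exact Stmt8Aux5.cond_to_rhs hf0 (Stmt8Aux4.lhs_to_cond hf0 H)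
  · rintro ⟨S, hS, h, hassoc⟩
    exact Stmt8Aux4.cond_to_lhs hf0 (Stmt8Aux4.rhs_to_cond hf0 hS hassoc)
end

section
/- Fix a positive integer M, and for n ≥ 1 let u_n(X) := (X^n − 1)/(X^{gcd(n,M)} − 1) ∈ ℤ[X], which is a polynomial since X^{gcd(n,M)} − 1 divides X^n − 1 in ℤ[X]. Then for all positive integers m, n with m dividing n, u_m divides u_n in ℤ[X]; equivalently, (X^m − 1)·(X^{gcd(n,M)} − 1) divides (X^n − 1)·(X^{gcd(m,M)} − 1) in ℤ[X]. -/
theorem stmt9 (M : ℕ) (hM : 1 ≤ M) (m n : ℕ) (hm : 0 < m) (hn : 0 < n) (hmn : m ∣ n) :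
    ((Polynomial.X : Polynomial ℤ) ^ m - 1) * ((Polynomial.X : Polynomial ℤ) ^ (Nat.gcd n M) - 1) ∣
      ((Polynomial.X : Polynomial ℤ) ^ n - 1) *
        ((Polynomial.X : Polynomial ℤ) ^ (Nat.gcd m M) - 1) := by
  have hG : 0 < Nat.gcd n M := Nat.gcd_pos_of_pos_left _ hn
  have hg : 0 < Nat.gcd m M := Nat.gcd_pos_of_pos_left _ hm
  have hgG : Nat.gcd m (Nat.gcd n M) = Nat.gcd m M := by
    rw [← Nat.gcd_assoc, Nat.gcd_eq_left hmn]
  rw [← Polynomial.prod_cyclotomic_eq_X_pow_sub_one hm ℤ,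
      ← Polynomial.prod_cyclotomic_eq_X_pow_sub_one hn ℤ,
      ← Polynomial.prod_cyclotomic_eq_X_pow_sub_one hG ℤ,
      ← Polynomial.prod_cyclotomic_eq_X_pow_sub_one hg ℤ,
      ← Finset.prod_union_inter]
  have hinter : m.divisors ∩ (Nat.gcd n M).divisors = (Nat.gcd m M).divisors := by
    ext d
    simp only [Finset.mem_inter, Nat.mem_divisors, ← hgG, Nat.dvd_gcd_iff]
    constructor
    · rintro ⟨⟨h1, _⟩, ⟨h2, _⟩⟩; exact ⟨⟨h1, h2⟩, hgG ▸ hg.ne'⟩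
    · rintro ⟨⟨h1, h2⟩, _⟩; exact ⟨⟨h1, hm.ne'⟩, ⟨h2, hG.ne'⟩⟩
  rw [hinter]
  refine mul_dvd_mul ?_ dvd_rfl
  apply Finset.prod_dvd_prod_of_subset
  intro d hd
  rcases Finset.mem_union.mp hd with h | h <;> rw [Nat.mem_divisors] at h ⊢
  · exact ⟨h.1.trans hmn, hn.ne'⟩
  · exact ⟨h.1.trans (Nat.gcd_dvd_left n M), hn.ne'⟩
end

section
/- Let M ≥ 1, let ζ ∈ ℂ be a primitive M-th root of unity, and let f ∈ ℂ[X] be monic with f(0) ≠ 0. Then f(X) divides f(X^k) in ℂ[X] for every positive integer k with k ≡ 1 (mod M), if and only if there exist a finite set S of pairs (m, j) of integers with m ≥ 1 and 0 ≤ j ≤ M − 1, together with natural numbers h_{m,j} for (m, j) ∈ S, such that f is associated in ℂ[X] to lcm_{(m,j) ∈ S} (ζ^j·X^m − 1)^{h_{m,j}}. -/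
/-!
If `f ∣ f.comp (X ^ k)` for `k ≡ 1 (mod M)`, then at a nonzero root `a` the multiplicity of `f`
is at most that at `a ^ k`, because `X ^ k - a ^ k` has `a` as a simple root. As `f` has finitely
many roots, `a ^ M` has finite order `m`, and the `b` with `b ^ m = a ^ m` are exactly the `a ^ k`
with `k ≡ 1 (mod M)`. So the multiplicity is constant on each such class, the class is the set of
simple roots of `ζ ^ j * X ^ m - 1` where `ζ ^ j = a ^ (-m)`, and `f` is the lcm of the matching
powers of these polynomials. Conversely `(ζ ^ j * X ^ m) ^ k = ζ ^ j * X ^ (m * k)`, so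
`ζ ^ j * X ^ m - 1` divides its composition with `X ^ k`, and this passes to powers, lcms and
associates.
-/

open Polynomial

lemma pow_eq_self_of_modEq_one {G : Type*} [Monoid G] {c : G} {M k : ℕ} (hc : c ^ M = 1)
    (hk : k ≡ 1 [MOD M]) : c ^ k = c := by
  have hk' : k % orderOf c = 1 % orderOf c := hk.of_dvd (orderOf_dvd_of_pow_eq_one hc)
  rw [← pow_mod_orderOf, hk', pow_mod_orderOf, pow_one]

lemma isOfFinOrder_of_forall_mul_pow_mem {G₀ : Type*} [GroupWithZero G₀] {a x : G₀} (ha : a ≠ 0)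
    (hx : x ≠ 0) {s : Set G₀} (hs : s.Finite) (h : ∀ t : ℕ, a * x ^ t ∈ s) : IsOfFinOrder x := by
  obtain ⟨t₁, t₂, hlt, heq⟩ := hs.exists_lt_map_eq_of_forall_mem h
  refine isOfFinOrder_iff_pow_eq_one.2 ⟨t₂ - t₁, Nat.sub_pos_of_lt hlt, ?_⟩
  refine mul_left_cancel₀ (pow_ne_zero t₁ hx) ?_
  rw [← pow_add, Nat.add_sub_cancel' hlt.le, mul_one]
  exact (mul_left_cancel₀ ha heq).symm

lemma exists_eq_pow_mul_add_one_of_pow_orderOf_eq {K : Type*} [Field K] {a b : K} (ha : a ≠ 0)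
    {M : ℕ} (hfin : IsOfFinOrder (a ^ M))
    (hb : b ^ orderOf (a ^ M) = a ^ orderOf (a ^ M)) : ∃ t, b = a ^ (M * t + 1) := by
  have : NeZero (orderOf (a ^ M)) := ⟨hfin.orderOf_pos.ne'⟩
  obtain ⟨t, -, ht⟩ := (IsPrimitiveRoot.orderOf (a ^ M)).eq_pow_of_pow_eq_one
    (ξ := b / a) (by rw [div_pow, hb, div_self (pow_ne_zero _ ha)])
  exact ⟨t, by rw [pow_succ, pow_mul, ht, div_mul_cancel₀ _ ha]⟩

lemma IsPrimitiveRoot.exists_pow_mul_eq_one {K : Type*} [Field K] {ζ : K} {M : ℕ} [NeZero M]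
    (hζ : IsPrimitiveRoot ζ M) {x : K} (hx : x ≠ 0) (hxM : x ^ M = 1) :
    ∃ j < M, ζ ^ j * x = 1 := by
  obtain ⟨j, hjM, hj⟩ := hζ.eq_pow_of_pow_eq_one (ξ := x⁻¹) (by rw [inv_pow, hxM, inv_one])
  exact ⟨j, hjM, by rw [hj, inv_mul_cancel₀ hx]⟩

namespace Polynomial

lemma rootMultiplicity_pow {R : Type*} [CommRing R] [IsDomain R] (p : R[X]) (n : ℕ) (a : R) :
    rootMultiplicity a (p ^ n) = n * rootMultiplicity a p := by
  classical
  rw [← count_roots, roots_pow, Multiset.count_nsmul, count_roots]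

lemma comp_dvd_comp {R : Type*} [CommSemiring R] {p q : R[X]} (h : p ∣ q) (r : R[X]) :
    p.comp r ∣ q.comp r := by
  obtain ⟨c, rfl⟩ := h
  rw [mul_comp]
  exact dvd_mul_right _ _

lemma pow_dvd_comp_pow {R : Type*} [CommRing R] {g r : R[X]} (h : g ∣ g.comp r) (n : ℕ) :
    g ^ n ∣ (g ^ n).comp r := by
  rw [pow_comp]
  exact pow_dvd_pow_of_dvd h n

lemma C_mul_X_pow_sub_one_dvd_comp {R : Type*} [CommRing R] {c : R} {M k : ℕ} (hc : c ^ M = 1)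
    (hk : k ≡ 1 [MOD M]) (m : ℕ) : C c * X ^ m - 1 ∣ (C c * X ^ m - 1).comp (X ^ k) := by
  have hcomp : (C c * X ^ m - 1).comp (X ^ k) = (C c * X ^ m) ^ k - 1 := by
    rw [mul_pow, ← C_pow, pow_eq_self_of_modEq_one hc hk, ← pow_mul, mul_comm m k, pow_mul]
    simp only [sub_comp, mul_comp, C_comp, pow_comp, X_comp, one_comp]
  rw [hcomp]
  exact sub_one_dvd_pow_sub_one _ k

variable {K : Type*} [Field K]

lemma rootMultiplicity_X_pow_sub_C [DecidableEq K] {k : ℕ} (hk : (k : K) ≠ 0) {b : K}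
    (hb : b ≠ 0) (a : K) : rootMultiplicity a (X ^ k - C b) = if a ^ k = b then 1 else 0 := by
  have hsep := separable_X_pow_sub_C b hk hb
  split_ifs with h
  · exact le_antisymm (rootMultiplicity_le_one_of_separable hsep a)
      ((rootMultiplicity_pos hsep.ne_zero).2 (by simp [h]))
  · exact rootMultiplicity_eq_zero (by simpa [sub_eq_zero] using h)

lemma rootMultiplicity_C_mul_X_pow_sub_one [DecidableEq K] {m : ℕ} (hm : (m : K) ≠ 0) {c : K}
    (hc : c ≠ 0) (b : K) :
    rootMultiplicity b (C c * X ^ m - 1) = if c * b ^ m = 1 then 1 else 0 := by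
  have : C c * X ^ m - 1 = C c * (X ^ m - C c⁻¹) := by
    rw [mul_sub, ← C_mul, mul_inv_cancel₀ hc, C_1]
  rw [this, ← count_roots, roots_C_mul _ hc, count_roots,
    rootMultiplicity_X_pow_sub_C hm (inv_ne_zero hc)]
  simp only [← mul_eq_one_iff_eq_inv₀ hc, mul_comm]

lemma rootMultiplicity_comp_X_pow (f : K[X]) {k : ℕ} (hk : (k : K) ≠ 0) {a : K} (ha : a ≠ 0) :
    rootMultiplicity a (f.comp (X ^ k)) = rootMultiplicity (a ^ k) f := by
  classical
  rcases eq_or_ne f 0 with rfl | hf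
  · simp
  obtain ⟨q, hfq, hq⟩ := f.exists_eq_pow_rootMultiplicity_mul_and_not_dvd hf (a ^ k)
  rw [dvd_iff_isRoot] at hq
  have hqa : ¬(q.comp (X ^ k)).IsRoot a := by simpa [eval_comp] using hq
  have hsub : X ^ k - C (a ^ k) ≠ 0 := (separable_X_pow_sub_C _ hk (pow_ne_zero k ha)).ne_zero
  have hcomp : f.comp (X ^ k) =
      (X ^ k - C (a ^ k)) ^ rootMultiplicity (a ^ k) f * q.comp (X ^ k) := by
    conv_lhs => rw [hfq]
    simp [mul_comp, pow_comp, sub_comp]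
  rw [hcomp, rootMultiplicity_mul (mul_ne_zero (pow_ne_zero _ hsub) fun h => hqa (by simp [h])),
    rootMultiplicity_pow, rootMultiplicity_X_pow_sub_C hk (pow_ne_zero k ha), if_pos rfl,
    rootMultiplicity_eq_zero hqa, mul_one, add_zero]

lemma rootMultiplicity_le_rootMultiplicity_pow {f : K[X]} (hf : f ≠ 0) {k : ℕ}
    (hk : (k : K) ≠ 0) (hdvd : f ∣ f.comp (X ^ k)) {a : K} (ha : a ≠ 0) :
    rootMultiplicity a f ≤ rootMultiplicity (a ^ k) f := by
  have hcomp : f.comp (X ^ k) ≠ 0 :=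
    (expand_ne_zero (Nat.pos_of_ne_zero (by rintro rfl; simp at hk))).2 hf
  rw [← rootMultiplicity_comp_X_pow f hk ha]
  exact rootMultiplicity_le_rootMultiplicity_of_dvd hcomp hdvd a

lemma dvd_iff_rootMultiplicity_le [IsAlgClosed K] {p q : K[X]} (hp : p ≠ 0) (hq : q ≠ 0) :
    p ∣ q ↔ ∀ a, rootMultiplicity a p ≤ rootMultiplicity a q := by
  classical
  simp only [IsAlgClosed.dvd_iff_roots_le_roots hp hq, Multiset.le_iff_count, count_roots]

lemma associated_lcm_of_rootMultiplicity_le [DecidableEq K] [IsAlgClosed K] {ι : Type*}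
    {f : K[X]} (hf : f ≠ 0) {s : Finset ι} {g : ι → K[X]} (hgf : ∀ i ∈ s, g i ∣ f)
    (hfg : ∀ a, f.IsRoot a → ∃ i ∈ s, rootMultiplicity a f ≤ rootMultiplicity a (g i)) :
    Associated f (s.lcm g) := by
  have hL : s.lcm g ≠ 0 := by
    rw [Ne, Finset.lcm_eq_zero_iff]
    rintro ⟨i, hi, hgi⟩
    exact hf (zero_dvd_iff.1 (hgi ▸ hgf i hi))
  refine associated_of_dvd_dvd ((dvd_iff_rootMultiplicity_le hf hL).2 fun a => ?_)
    (Finset.lcm_dvd hgf)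
  by_cases ha : f.IsRoot a
  · obtain ⟨i, hi, hle⟩ := hfg a ha
    exact hle.trans (rootMultiplicity_le_rootMultiplicity_of_dvd hL (Finset.dvd_lcm hi) a)
  · simp [rootMultiplicity_eq_zero ha]

lemma C_mul_X_pow_sub_one_pow_dvd [CharZero K] [IsAlgClosed K] {f : K[X]} (hf : f ≠ 0) {c : K}
    (hc : c ≠ 0) {m : ℕ} (hm : m ≠ 0) {n : ℕ}
    (h : ∀ b, c * b ^ m = 1 → n ≤ rootMultiplicity b f) : (C c * X ^ m - 1) ^ n ∣ f := by
  classical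
  have hg : C c * X ^ m - 1 ≠ 0 := fun h0 => by simpa [hm] using congrArg (eval 0) h0
  refine (dvd_iff_rootMultiplicity_le (pow_ne_zero n hg) hf).2 fun b => ?_
  rw [rootMultiplicity_pow, rootMultiplicity_C_mul_X_pow_sub_one (Nat.cast_ne_zero.2 hm) hc]
  split_ifs with hb
  · simpa using h b hb
  · simp

lemma lcm_dvd_comp_lcm [DecidableEq K] {ι : Type*} {s : Finset ι} {g : ι → K[X]} {r : K[X]}
    (h : ∀ i ∈ s, g i ∣ (g i).comp r) : s.lcm g ∣ (s.lcm g).comp r :=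
  Finset.lcm_dvd fun i hi => (h i hi).trans (comp_dvd_comp (Finset.dvd_lcm hi) r)

theorem dvd_comp_X_pow_of_associated_lcm [DecidableEq K] {M k : ℕ} {ζ : K} (hζ : ζ ^ M = 1)
    (hk : k ≡ 1 [MOD M]) {f : K[X]} {S : Finset (ℕ × ℕ)} {h : ℕ × ℕ → ℕ}
    (hf : Associated f (S.lcm fun p => (C (ζ ^ p.2) * X ^ p.1 - 1) ^ h p)) :
    f ∣ f.comp (X ^ k) := by
  have hζj (j : ℕ) : (ζ ^ j) ^ M = 1 := by rw [← pow_mul, mul_comm, pow_mul, hζ, one_pow]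
  refine hf.dvd.trans ((lcm_dvd_comp_lcm fun p _ => ?_).trans (comp_dvd_comp hf.symm.dvd _))
  exact pow_dvd_comp_pow (C_mul_X_pow_sub_one_dvd_comp (hζj p.2) hk p.1) (h p)

section DvdCompXPow

variable [CharZero K] {M : ℕ} {f : K[X]}

lemma isOfFinOrder_pow_of_isRoot (hf : f ≠ 0) (hstab : ∀ t : ℕ, f ∣ f.comp (X ^ (M * t + 1)))
    {a : K} (ha : f.IsRoot a) (ha0 : a ≠ 0) : IsOfFinOrder (a ^ M) := by
  refine isOfFinOrder_of_forall_mul_pow_mem ha0 (pow_ne_zero M ha0) (finite_setOfPred_isRoot hf)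
    fun t => ?_
  have hle := rootMultiplicity_le_rootMultiplicity_pow hf (Nat.cast_ne_zero.2 (Nat.succ_ne_zero _))
    (hstab t) ha0
  rw [← pow_mul, ← pow_succ', Set.mem_ofPred_eq, ← rootMultiplicity_pos hf]
  exact ((rootMultiplicity_pos hf).2 ha).trans_le hle

lemma rootMultiplicity_le_of_mul_pow_orderOf_eq_one (hf : f ≠ 0)
    (hstab : ∀ t : ℕ, f ∣ f.comp (X ^ (M * t + 1))) {a b c : K} (ha : f.IsRoot a) (ha0 : a ≠ 0)
    (hca : c * a ^ orderOf (a ^ M) = 1) (hcb : c * b ^ orderOf (a ^ M) = 1) :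
    rootMultiplicity a f ≤ rootMultiplicity b f := by
  obtain ⟨t, rfl⟩ := exists_eq_pow_mul_add_one_of_pow_orderOf_eq ha0
    (isOfFinOrder_pow_of_isRoot hf hstab ha ha0)
    (mul_left_cancel₀ (left_ne_zero_of_mul_eq_one hca) (hcb.trans hca.symm))
  exact rootMultiplicity_le_rootMultiplicity_pow hf (Nat.cast_ne_zero.2 (Nat.succ_ne_zero _))
    (hstab t) ha0

theorem exists_associated_lcm_of_dvd_comp [DecidableEq K] [IsAlgClosed K] [NeZero M] {ζ : K}
    (hζ : IsPrimitiveRoot ζ M) (hf0 : f.eval 0 ≠ 0)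
    (hstab : ∀ t : ℕ, f ∣ f.comp (X ^ (M * t + 1))) :
    ∃ S : Finset (ℕ × ℕ), (∀ p ∈ S, 1 ≤ p.1 ∧ p.2 ≤ M - 1) ∧ ∃ h : ℕ × ℕ → ℕ,
      Associated f (S.lcm fun p => (C (ζ ^ p.2) * X ^ p.1 - 1) ^ h p) := by
  have hf : f ≠ 0 := fun h => hf0 (by simp [h])
  set R := f.roots.toFinset
  have hR (a : K) : a ∈ R ↔ f.IsRoot a := by simp [R, hf]
  have hR0 (a : K) (ha : a ∈ R) : a ≠ 0 := by
    rintro rfl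
    exact hf0 ((hR 0).1 ha)
  have hfin (a : K) (ha : a ∈ R) : IsOfFinOrder (a ^ M) :=
    isOfFinOrder_pow_of_isRoot hf hstab ((hR a).1 ha) (hR0 a ha)
  have hj (a : K) (ha : a ∈ R) : ∃ j < M, ζ ^ j * a ^ orderOf (a ^ M) = 1 :=
    hζ.exists_pow_mul_eq_one (pow_ne_zero _ (hR0 a ha))
      (by rw [← pow_mul, mul_comm, pow_mul, pow_orderOf_eq_one])
  choose! j hjM hj using hj
  -- The class of a root `a` is the zero set of `ζ ^ j a * X ^ m - 1`; the multiplicity is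
  -- constant on it, so `h` takes that common value.
  set F : K → ℕ × ℕ := fun a => (orderOf (a ^ M), j a)
  set h : ℕ × ℕ → ℕ := fun p => (R.filter (F · = p)).sup (rootMultiplicity · f)
  refine ⟨R.image F, ?_, h, ?_⟩
  · simp only [Finset.mem_image]
    rintro _ ⟨a, ha, rfl⟩
    exact ⟨(hfin a ha).orderOf_pos, Nat.le_sub_one_of_lt (hjM a ha)⟩
  rw [Finset.lcm_image]
  refine associated_lcm_of_rootMultiplicity_le hf (fun a ha => ?_) fun b hb => ⟨b, (hR b).2 hb, ?_⟩
  · refine C_mul_X_pow_sub_one_pow_dvd hf (left_ne_zero_of_mul_eq_one (hj a ha))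
      (hfin a ha).orderOf_pos.ne' fun b hb => Finset.sup_le fun a' ha' => ?_
    obtain ⟨ha'R, hFa'⟩ := Finset.mem_filter.1 ha'
    obtain ⟨hm, hj'⟩ := Prod.ext_iff.1 hFa'
    simp only [F] at hm hj'
    refine rootMultiplicity_le_of_mul_pow_orderOf_eq_one hf hstab ((hR a').1 ha'R) (hR0 a' ha'R)
      (hj a' ha'R) ?_
    rwa [hm, hj']
  · have hbR := (hR b).2 hb
    rw [Function.comp_apply, rootMultiplicity_pow, rootMultiplicity_C_mul_X_pow_sub_one
      (Nat.cast_ne_zero.2 (hfin b hbR).orderOf_pos.ne') (left_ne_zero_of_mul_eq_one (hj b hbR)),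
      if_pos (hj b hbR), mul_one]
    exact Finset.le_sup (f := (rootMultiplicity · f)) (Finset.mem_filter.2 ⟨hbR, rfl⟩)

end DvdCompXPow

end Polynomial

theorem stmt10_general (M : ℕ) (hM : 1 ≤ M) (ζ : ℂ)
    (hζ : ζ ^ M = 1) (hζprim : ∀ t : ℕ, 1 ≤ t → t < M → ζ ^ t ≠ 1)
    (f : Polynomial ℂ) (hf0 : f.eval 0 ≠ 0) :
    (∀ k : ℕ, 0 < k → k % M = 1 % M → f ∣ f.comp (Polynomial.X ^ k)) ↔
    ∃ S : Finset (ℕ × ℕ), (∀ p ∈ S, 1 ≤ p.1 ∧ p.2 ≤ M - 1) ∧ ∃ h : ℕ × ℕ → ℕ,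
      Associated f (S.lcm fun p =>
        (Polynomial.C (ζ ^ p.2) * Polynomial.X ^ p.1 - 1) ^ (h p)) := by
  have : NeZero M := ⟨by omega⟩
  constructor
  · intro hdvd
    exact exists_associated_lcm_of_dvd_comp (.mk_of_lt ζ hM hζ hζprim) hf0 fun t =>
      hdvd _ (M * t).succ_pos (Nat.mul_add_mod_self_left M t 1)
  · rintro ⟨S, -, h, hf⟩ k - hk
    exact dvd_comp_X_pow_of_associated_lcm hζ hk hf

theorem stmt10 (M : ℕ) (hM : 1 ≤ M) (ζ : ℂ)
    (hζ : ζ ^ M = 1) (hζprim : ∀ t : ℕ, 1 ≤ t → t < M → ζ ^ t ≠ 1)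
    (f : Polynomial ℂ) (hmonic : f.Monic) (hf0 : f.eval 0 ≠ 0) :
    (∀ k : ℕ, 0 < k → k % M = 1 % M → f ∣ f.comp (Polynomial.X ^ k)) ↔
    ∃ S : Finset (ℕ × ℕ), (∀ p ∈ S, 1 ≤ p.1 ∧ p.2 ≤ M - 1) ∧ ∃ h : ℕ × ℕ → ℕ,
      Associated f (S.lcm fun p =>
        (Polynomial.C (ζ ^ p.2) * Polynomial.X ^ p.1 - 1) ^ (h p)) :=
  stmt10_general M hM ζ hζ hζprim f hf0
end

section
/- Let t ≥ 0, let c_1, …, c_t be positive integers, let h_1, …, h_t ∈ ℕ, and set H := h_1 + ⋯ + h_t. Let f ∈ ℂ[X] be a nonzero polynomial such that ∏_{i=1}^t (X^{c_i} − 1)^{h_i} divides f in ℂ[X]. Then f has at least H + 1 nonzero coefficients. -/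
/-!
Induction on the exponent `n` of `(X - a) ^ n ∣ p`. Dividing `p` by the largest power of `X`
changes neither the number of its monomials nor the divisibility, as `X - a` is coprime to `X`
for `a ≠ 0`. Once the constant term is nonzero, differentiation removes exactly one monomial and
(in characteristic zero) lowers the multiplicity of `a` by exactly one.
-/

open Polynomial Finset

namespace Polynomial

variable {R : Type*}

theorem support_X_pow_mul [Semiring R] (k : ℕ) (p : R[X]) :
    (X ^ k * p).support = p.support.map (addRightEmbedding k) := by
  ext n
  simp only [mem_support_iff, coeff_X_pow_mul', mem_map, addRightEmbedding_apply]
  split_ifs with hk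
  · exact ⟨fun h => ⟨n - k, h, Nat.sub_add_cancel hk⟩, by rintro ⟨m, hm, rfl⟩; simpa using hm⟩
  · simp only [ne_eq, not_true_eq_false, false_iff, not_exists, not_and]
    intro m _ hm
    omega

theorem card_support_X_pow_mul [Semiring R] (k : ℕ) (p : R[X]) :
    #(X ^ k * p).support = #p.support := by
  rw [support_X_pow_mul, card_map]

theorem card_support_derivative_add_one [Semiring R] [IsAddTorsionFree R] {p : R[X]}
    (h0 : p.coeff 0 ≠ 0) : #(derivative p).support + 1 = #p.support := by
  have hsupp : p.support = insert 0 ((derivative p).support.map (addRightEmbedding 1)) := by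
    ext (_ | n)
    · simpa using h0
    · simp [← mem_support_derivative (p := p)]
  rw [hsupp, card_insert_of_notMem (by simp), card_map]

theorem lt_card_support_of_pow_X_sub_C_dvd {K : Type*} [Field K] [CharZero K] {a : K}
    (ha : a ≠ 0) {n : ℕ} {p : K[X]} (hp : p ≠ 0) (hdvd : (X - C a) ^ n ∣ p) :
    n < #p.support := by
  induction n generalizing p with
  | zero => exact card_pos.mpr (nonempty_support_iff.mpr hp)
  | succ n ih =>
    obtain ⟨q, hpq, hXq⟩ := exists_eq_pow_rootMultiplicity_mul_and_not_dvd p hp 0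
    rw [C_0, sub_zero] at hpq hXq
    rw [hpq] at hp hdvd ⊢
    have hq0 : q.coeff 0 ≠ 0 := mt X_dvd_iff.mpr hXq
    have hcop : IsCoprime (X - C a) (X - C 0) :=
      isCoprime_X_sub_C_of_isUnit_sub (by rwa [sub_zero, isUnit_iff_ne_zero])
    rw [C_0, sub_zero] at hcop
    have hdvd_q : (X - C a) ^ (n + 1) ∣ q := hcop.pow.dvd_of_dvd_mul_left hdvd
    have hderiv : derivative q ≠ 0 := by
      have := natDegree_le_of_dvd hdvd_q (right_ne_zero_of_mul hp)
      rw [natDegree_pow, natDegree_X_sub_C] at this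
      rw [Ne, derivative_eq_zero]
      omega
    rw [card_support_X_pow_mul, ← card_support_derivative_add_one hq0]
    have hdvd_deriv : (X - C a) ^ n ∣ derivative q := by
      simpa using pow_sub_one_dvd_derivative_of_pow_dvd hdvd_q
    exact Nat.succ_lt_succ (ih hderiv hdvd_deriv)

end Polynomial

theorem stmt11_general (t : ℕ) (c : Fin t → ℕ) (h : Fin t → ℕ)
    (H : ℕ) (hH : H = ∑ i, h i) (f : Polynomial ℂ) (hf : f ≠ 0)
    (hdvd : (∏ i, ((Polynomial.X : Polynomial ℂ) ^ (c i) - 1) ^ (h i)) ∣ f) :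
    H + 1 ≤ f.support.card := by
  have hroot : (X - C 1 : ℂ[X]) ^ H ∣ f := by
    refine dvd_trans ?_ hdvd
    rw [hH, ← prod_pow_eq_pow_sum]
    refine prod_dvd_prod_of_dvd _ _ fun i _ => pow_dvd_pow_of_dvd ?_ _
    simpa using sub_dvd_pow_sub_pow (X : ℂ[X]) 1 (c i)
  exact lt_card_support_of_pow_X_sub_C_dvd one_ne_zero hf hroot

theorem stmt11 (t : ℕ) (c : Fin t → ℕ) (hc : ∀ i, 0 < c i) (h : Fin t → ℕ)
    (H : ℕ) (hH : H = ∑ i, h i) (f : Polynomial ℂ) (hf : f ≠ 0)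
    (hdvd : (∏ i, ((Polynomial.X : Polynomial ℂ) ^ (c i) - 1) ^ (h i)) ∣ f) :
    H + 1 ≤ f.support.card :=
  stmt11_general t c h H hH f hf hdvd
end

section
/- Let K be a field and let u_1, …, u_k (k ≥ 1) be nonzero elements of K that are pairwise multiplicatively dependent: for all i, j there exist nonzero integers r, s with u_i^r = u_j^s. Then there exist a nonzero element w ∈ K, roots of unity ζ_1, …, ζ_k ∈ K, and integers r_1, …, r_k with gcd(r_1, …, r_k) = 1, such that u_i = ζ_i · w^{r_i} for each i, where w^{r_i} denotes an integer (possibly negative) power of w. -/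
private lemma rootaux12 {K : Type*} [Field K] (x : K) (n : ℤ) (hn : n ≠ 0)
    (h : x ^ n = 1) : ∃ t : ℕ, 1 ≤ t ∧ x ^ t = 1 := by
  refine ⟨n.natAbs, Int.natAbs_pos.mpr hn, ?_⟩
  rcases Int.natAbs_eq n with he | he
  · have : x ^ ((n.natAbs : ℤ)) = 1 := by rw [← he, h]
    rwa [zpow_natCast] at this
  · have : x ^ ((n.natAbs : ℤ)) = 1 := by
      have h2 : x ^ (-(n.natAbs : ℤ)) = 1 := by rw [← he, h]
      rw [zpow_neg] at h2
      rw [← inv_inv (x ^ ((n.natAbs : ℤ))), h2, inv_one]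
    rwa [zpow_natCast] at this

private lemma bez12 {ι : Type*} [DecidableEq ι] (s : Finset ι) (f : ι → ℤ) :
    ∃ m : ι → ℤ, ∑ i ∈ s, m i * f i = s.gcd f := by
  classical
  induction s using Finset.induction_on with
  | empty => exact ⟨0, by simp⟩
  | @insert a s ha ih =>
    obtain ⟨m, hm⟩ := ih
    refine ⟨fun i => if i = a then Int.gcdA (f a) (s.gcd f)
      else Int.gcdB (f a) (s.gcd f) * m i, ?_⟩
    rw [Finset.gcd_insert, Finset.sum_insert ha]
    beta_reduce
    rw [if_pos rfl]
    have hrest : ∑ i ∈ s, (if i = a then Int.gcdA (f a) (s.gcd f)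
        else Int.gcdB (f a) (s.gcd f) * m i) * f i
        = Int.gcdB (f a) (s.gcd f) * ∑ i ∈ s, m i * f i := by
      rw [Finset.mul_sum]
      refine Finset.sum_congr rfl fun i hi => ?_
      rw [if_neg (by rintro rfl; exact ha hi)]
      ring
    rw [hrest, hm, ← Int.coe_gcd, Int.gcd_eq_gcd_ab]
    ring

private lemma zpowsum12 {K : Type*} [Field K] (x : K) (hx : x ≠ 0)
    {ι : Type*} (s : Finset ι) (g : ι → ℤ) :
    ∏ i ∈ s, x ^ g i = x ^ (∑ i ∈ s, g i) := by
  classical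
  induction s using Finset.cons_induction with
  | empty => simp
  | cons a s ha ih =>
    rw [Finset.prod_cons, Finset.sum_cons, zpow_add₀ hx, ih]

private lemma gcd_nonneg12 {ι : Type*} (s : Finset ι) (f : ι → ℤ) : 0 ≤ s.gcd f := by
  have h := Finset.normalize_gcd (s := s) (f := f)
  rw [← Int.abs_eq_normalize] at h
  rw [← h]
  positivity

theorem stmt12 (K : Type*) [Field K] (k : ℕ) (hk : 1 ≤ k) (u : Fin k → K)
    (hu : ∀ i, u i ≠ 0)
    (hdep : ∀ i j, ∃ r s : ℤ, r ≠ 0 ∧ s ≠ 0 ∧ u i ^ r = u j ^ s) :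
    ∃ w : K, w ≠ 0 ∧ ∃ ζ : Fin k → K, ∃ r : Fin k → ℤ,
      (∀ i, ∃ t : ℕ, 1 ≤ t ∧ ζ i ^ t = 1) ∧
      Finset.univ.gcd r = 1 ∧
      ∀ i, u i = ζ i * w ^ (r i) := by
  classical
  set i0 : Fin k := ⟨0, hk⟩ with hi0
  by_cases hru : ∃ t : ℕ, 1 ≤ t ∧ u i0 ^ t = 1
  · -- all the u i are roots of unity
    obtain ⟨t, ht1, ht⟩ := hru
    refine ⟨1, one_ne_zero, u, fun i => if i = i0 then 1 else 0, ?_, ?_, ?_⟩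
    · intro i
      obtain ⟨r, s, hr, hs, h⟩ := hdep i i0
      have hpow : u i ^ (r * (t : ℤ)) = 1 := by
        calc u i ^ (r * (t:ℤ)) = (u i ^ r) ^ (t:ℤ) := by rw [zpow_mul]
        _ = (u i0 ^ s) ^ (t:ℤ) := by rw [h]
        _ = (u i0 ^ (t:ℤ)) ^ s := by rw [← zpow_mul, mul_comm, zpow_mul]
        _ = 1 := by rw [zpow_natCast, ht, one_zpow]
      exact rootaux12 (u i) (r * t) (mul_ne_zero hr (Int.natCast_ne_zero.mpr (by omega))) hpow
    · have hdvd : Finset.univ.gcd (fun i => if i = i0 then (1:ℤ) else 0) ∣ 1 := by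
        have h := Finset.gcd_dvd (f := fun i => if i = i0 then (1:ℤ) else 0)
          (Finset.mem_univ i0)
        simpa using h
      have hnn := gcd_nonneg12 Finset.univ (fun i => if i = i0 then (1:ℤ) else 0)
      rcases Int.isUnit_iff.mp (isUnit_of_dvd_one hdvd) with h1 | h1 <;> omega
    · intro i; simp
  · -- no u i is a root of unity
    have key : ∀ i, ∃ a b : ℤ, 0 < a ∧ b ≠ 0 ∧ u i ^ a = u i0 ^ b := by
      intro i
      obtain ⟨r, s, hr, hs, h⟩ := hdep i i0
      rcases lt_or_gt_of_ne hr with hneg | hpos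
      · exact ⟨-r, -s, by omega, by omega, by rw [zpow_neg, zpow_neg, h]⟩
      · exact ⟨r, s, hpos, hs, h⟩
    choose a b ha hb hab using key
    set A : ℤ := ∏ j, a j with hA
    have hApos : 0 < A := Finset.prod_pos fun j _ => ha j
    obtain ⟨c, hcdef⟩ : ∃ c : Fin k → ℤ, ∀ i, c i = b i * ∏ j ∈ Finset.univ.erase i, a j :=
      ⟨fun i => b i * ∏ j ∈ Finset.univ.erase i, a j, fun i => rfl⟩
    have hcu : ∀ i, u i ^ A = u i0 ^ c i := by
      intro i
      have hsplit : A = a i * ∏ j ∈ Finset.univ.erase i, a j :=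
        (Finset.mul_prod_erase _ _ (Finset.mem_univ i)).symm
      rw [hsplit, zpow_mul, hab i, ← zpow_mul, ← hcdef i]
    have hcne : ∀ i, c i ≠ 0 := by
      intro i hci
      apply hru
      have h1 : u i0 ^ c i = 1 := by rw [hci, zpow_zero]
      have hAone : u i ^ A = 1 := by rw [hcu i, h1]
      obtain ⟨r, s, hr, hs, h⟩ := hdep i0 i
      have h2 : u i0 ^ (r * A) = 1 := by
        rw [zpow_mul, h, ← zpow_mul, mul_comm, zpow_mul, hAone, one_zpow]
      exact rootaux12 (u i0) (r * A) (mul_ne_zero hr (ne_of_gt hApos)) h2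
    set d : ℤ := Finset.univ.gcd c with hd
    have hddvd : ∀ i, d ∣ c i := fun i => Finset.gcd_dvd (Finset.mem_univ i)
    have hdne : d ≠ 0 := by
      intro h0
      exact hcne i0 ((Finset.gcd_eq_zero_iff.mp h0) i0 (Finset.mem_univ i0))
    obtain ⟨m, hm⟩ := bez12 Finset.univ c
    set w : K := ∏ i, u i ^ m i with hw
    have hwne : w ≠ 0 := Finset.prod_ne_zero_iff.mpr fun i _ => zpow_ne_zero _ (hu i)
    have hwA : w ^ A = u i0 ^ d := by
      rw [hw, ← Finset.prod_zpow]
      have hcongr : ∀ i ∈ Finset.univ, (u i ^ m i) ^ A = u i0 ^ (m i * c i) := by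
        intro i _
        rw [← zpow_mul, mul_comm (m i) A, zpow_mul, hcu i, ← zpow_mul, mul_comm]
      rw [Finset.prod_congr rfl hcongr, zpowsum12 _ (hu i0), hm]
    obtain ⟨r, hrdef⟩ : ∃ r : Fin k → ℤ, ∀ i, r i = c i / d := ⟨fun i => c i / d, fun i => rfl⟩
    have hcr : ∀ i, c i = d * r i := fun i => by
      rw [hrdef i]; exact (Int.mul_ediv_cancel' (hddvd i)).symm
    refine ⟨w, hwne, fun i => u i / w ^ r i, r, ?_, ?_, ?_⟩
    · intro i
      have hz : (u i / w ^ r i) ^ A = 1 := by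
        calc (u i / w ^ r i) ^ A = u i ^ A / (w ^ r i) ^ A := div_zpow _ _ _
        _ = u i0 ^ c i / (w ^ A) ^ r i := by
            rw [hcu i, ← zpow_mul, mul_comm (r i) A, zpow_mul]
        _ = u i0 ^ c i / u i0 ^ (d * r i) := by rw [hwA, ← zpow_mul]
        _ = 1 := by rw [← hcr i, div_self (zpow_ne_zero _ (hu i0))]
      exact rootaux12 _ A (ne_of_gt hApos) hz
    · have hgc : Finset.univ.gcd c = normalize d * Finset.univ.gcd r := by
        calc Finset.univ.gcd c = Finset.univ.gcd (fun i => d * r i) := by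
              refine Finset.gcd_congr rfl fun i _ => hcr i
        _ = normalize d * Finset.univ.gcd r := Finset.gcd_mul_left
      have hnorm : normalize d = d := by
        rw [← Int.abs_eq_normalize]
        exact abs_of_nonneg (gcd_nonneg12 _ _)
      rw [hnorm] at hgc
      have : d * 1 = d * Finset.univ.gcd r := by rw [mul_one, ← hgc, hd]
      exact (mul_left_cancel₀ hdne this).symm
    · intro i
      rw [div_mul_cancel₀ _ (zpow_ne_zero _ hwne)]
end

section
/- Let α, β ∈ ℂ be nonzero algebraic integers such that α/β is not a root of unity (in particular α ≠ β), and let m ≥ 2 be an integer. Suppose that ((α^n − β^n)/(α − β))^m is a rational integer for every n ≥ 1. Then there exist γ, α′, β′ ∈ ℂ with α = γ·α′, β = γ·β′ and γ^m ∈ ℚ, such that either (i) (α′^n − β′^n)/(α′ − β′) ∈ ℚ for all n ≥ 1, or (ii) m is even and there exist coprime integers r, s and complex numbers ρ, σ with ρ² = r, σ² = s, α′ = ρ + σ and β′ = ρ − σ (in which case ((α′^n − β′^n)/(α′ − β′))² ∈ ℚ for all n ≥ 1). -/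
/-!
Dividing `α`, `β` by `γ = α + β` (with `γ ^ m = U₂ ^ m ∈ ℤ`) gives `a + b = 1` with every
`U_n(a, b) ^ m` rational. It suffices that `a * b` is rational: the recurrence
`U_{n+2} = (a + b) U_{n+1} - a b U_n` then makes every `U_n(a, b)` rational. If an embedding `σ`
of `ℚ(a)` into `ℂ` moved `a * b`, then `c = σ a`, `d = σ b` would satisfy
`U_n(c, d) ^ m = U_n(a, b) ^ m` for all `n`. Expanding `(a ^ n - b ^ n) ^ m` binomially, both sides
are exponential polynomials in `n` with nonzero coefficients, so by Dedekind's independence of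
characters their frequencies `a ^ i * b ^ (m - i)` and `c ^ j * d ^ (m - j)` agree. These are
geometric progressions of ratios `a / b` and `c / d`, which therefore generate the same cyclic
group: `a / b = (c / d) ^ (±1)`, and `a + b = c + d = 1` forces `{c, d} = {a, b}`.
-/

open Finset

noncomputable def lucasU {K : Type*} [Field K] (a b : K) (n : ℕ) : K := (a ^ n - b ^ n) / (a - b)

section Lucas

variable {K : Type*} [Field K] {a b : K}

@[simp] theorem lucasU_zero : lucasU a b 0 = 0 := by simp [lucasU]

theorem lucasU_one (hab : a ≠ b) : lucasU a b 1 = 1 := by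
  simp [lucasU, div_self (sub_ne_zero.2 hab)]

theorem lucasU_two (hab : a ≠ b) : lucasU a b 2 = a + b := by
  rw [lucasU, div_eq_iff (sub_ne_zero.2 hab)]; ring

theorem lucasU_add_two (n : ℕ) :
    lucasU a b (n + 2) = (a + b) * lucasU a b (n + 1) - a * b * lucasU a b n := by
  simp only [lucasU, mul_div_assoc', div_sub_div_same]
  ring

theorem lucasU_div_succ {e : K} (he : e ≠ 0) (n : ℕ) :
    lucasU (a / e) (b / e) (n + 1) = lucasU a b (n + 1) / e ^ n := by
  simp only [lucasU, div_pow, ← sub_div]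
  field_simp
  ring

theorem map_lucasU {L F : Type*} [Field L] [FunLike F K L] [RingHomClass F K L] (f : F) (n : ℕ) :
    f (lucasU a b n) = lucasU (f a) (f b) n := by
  simp [lucasU, map_div₀]

theorem lucasU_mem_of_add_mem_of_mul_mem {S : Subring K} (hab : a ≠ b) (hs : a + b ∈ S)
    (hp : a * b ∈ S) (n : ℕ) : lucasU a b n ∈ S := by
  induction n using Nat.twoStepInduction with
  | zero => simp
  | one => simp [lucasU_one hab]
  | more n ih₀ ih₁ =>
    rw [lucasU_add_two]
    exact sub_mem (mul_mem hs ih₁) (mul_mem hp ih₀)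

end Lucas

theorem linearIndependent_pow_seq (K : Type*) [CommRing K] [IsDomain K] :
    LinearIndependent K (fun v : K => fun n : ℕ => v ^ n) :=
  (linearIndependent_monoidHom (Multiplicative ℕ) K).comp (powersHom K) (powersHom K).injective

theorem exists_eq_of_sum_pow_eq {K ι κ : Type*} [CommRing K] [IsDomain K] {s : Finset ι}
    {t : Finset κ} {x : ι → K} {y : κ → K} {lam : ι → K} {mu : κ → K} (hx : Set.InjOn x s)
    (hlam : ∀ i ∈ s, lam i ≠ 0)
    (h : ∀ n : ℕ, ∑ i ∈ s, lam i * x i ^ n = ∑ j ∈ t, mu j * y j ^ n) {i : ι} (hi : i ∈ s) :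
    ∃ j ∈ t, y j = x i := by
  classical
  by_contra! hne
  set l : K →₀ K :=
    ∑ i ∈ s, Finsupp.single (x i) (lam i) - ∑ j ∈ t, Finsupp.single (y j) (mu j)
  have hl : Finsupp.linearCombination K (fun v : K => fun n : ℕ => v ^ n) l = 0 := by
    ext n
    simp [l, map_sub, map_sum, h n]
  have hli := linearIndependent_iff.mp (linearIndependent_pow_seq K) l hl
  have hlx : l (x i) = lam i := by
    simp only [l, Finsupp.sub_apply, Finsupp.finsetSum_apply, Finsupp.single_apply]
    rw [Finset.sum_eq_single i, Finset.sum_eq_zero, sub_zero, if_pos rfl]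
    · exact fun j hj => if_neg (hne j hj)
    · exact fun i' hi' hne' => if_neg fun he => hne' (hx hi' hi he)
    · exact fun h => absurd hi h
  exact hlam i hi (by rw [← hlx, hli, Finsupp.zero_apply])

theorem sub_pow_pow_eq_sum {R : Type*} [CommRing R] (u v : R) (m n : ℕ) :
    (u ^ n - v ^ n) ^ m =
      ∑ i ∈ range (m + 1), (-1) ^ (i + m) * (m.choose i : R) * (u ^ i * v ^ (m - i)) ^ n := by
  rw [sub_pow]
  refine sum_congr rfl fun i _ => ?_
  rw [mul_pow, ← pow_mul, ← pow_mul, ← pow_mul, ← pow_mul]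
  ring

section GroupWithZero

variable {G₀ : Type*} [GroupWithZero G₀]

theorem pow_injective_of_not_isOfFinOrder₀ {x : G₀} (hx0 : x ≠ 0) (hx : ¬IsOfFinOrder x) :
    Function.Injective (fun n : ℕ => x ^ n) := by
  lift x to G₀ˣ using hx0.isUnit
  rw [Units.isOfFinOrder_val] at hx
  intro i j hij
  exact injective_pow_iff_not_isOfFinOrder.mpr hx (Units.ext (by simpa using hij))

theorem eq_or_inv_eq_of_zpow_eq_of_zpow_eq {u w : G₀} (hu0 : u ≠ 0) (hu : ¬IsOfFinOrder u)
    {k l : ℤ} (hk : u = w ^ k) (hl : w = u ^ l) : u = w ∨ u⁻¹ = w := by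
  have hw0 : w ≠ 0 := hl ▸ zpow_ne_zero l hu0
  lift u to G₀ˣ using hu0.isUnit
  lift w to G₀ˣ using hw0.isUnit
  rw [Units.isOfFinOrder_val] at hu
  have hk' : u = w ^ k := Units.ext (by simpa using hk)
  have hl' : w = u ^ l := Units.ext (by simpa using hl)
  have : Subgroup.zpowers u = Subgroup.zpowers w :=
    le_antisymm (Subgroup.zpowers_le.mpr ⟨k, hk'.symm⟩) (Subgroup.zpowers_le.mpr ⟨l, hl'.symm⟩)
  rcases (Subgroup.zpowers_eq_zpowers_iff hu).mp this with h | h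
  · exact Or.inl (congrArg Units.val h)
  · exact Or.inr (by simpa using congrArg Units.val h)

end GroupWithZero

section Progression

variable {K : Type*} [Field K] {a b c d : K} {m : ℕ}

theorem pow_mul_pow_sub_eq (hb : b ≠ 0) {i : ℕ} (hi : i ≤ m) :
    a ^ i * b ^ (m - i) = b ^ m * (a / b) ^ i := by
  rw [div_pow, ← pow_sub_mul_pow b hi]
  field_simp

theorem ne_of_not_isOfFinOrder_div (hb : b ≠ 0) (h : ¬IsOfFinOrder (a / b)) : a ≠ b := by
  rintro rfl
  exact h (by simp [hb])

theorem injOn_pow_mul_pow_sub (ha : a ≠ 0) (hb : b ≠ 0) (hu : ¬IsOfFinOrder (a / b)) :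
    Set.InjOn (fun i => a ^ i * b ^ (m - i)) (range (m + 1)) := by
  intro i hi j hj hij
  simp only [coe_range, Set.mem_Iio, Nat.lt_succ_iff] at hi hj
  simp only [pow_mul_pow_sub_eq hb hi, pow_mul_pow_sub_eq hb hj] at hij
  exact pow_injective_of_not_isOfFinOrder₀ (div_ne_zero ha hb) hu
    (mul_left_cancel₀ (pow_ne_zero m hb) hij)

theorem exists_pow_mul_pow_eq_of_lucasU_pow_eq [CharZero K] (ha : a ≠ 0) (hb : b ≠ 0)
    (hu : ¬IsOfFinOrder (a / b)) (hcd : c ≠ d) (h : ∀ n, lucasU a b n ^ m = lucasU c d n ^ m)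
    {i : ℕ} (hi : i ≤ m) : ∃ j ≤ m, c ^ j * d ^ (m - j) = a ^ i * b ^ (m - i) := by
  have hab : a - b ≠ 0 := sub_ne_zero.2 (ne_of_not_isOfFinOrder_div hb hu)
  have hcd : c - d ≠ 0 := sub_ne_zero.2 hcd
  have hsum : ∀ n : ℕ,
      (c - d) ^ m * (a ^ n - b ^ n) ^ m = (a - b) ^ m * (c ^ n - d ^ n) ^ m := by
    intro n
    have := h n
    rw [lucasU, lucasU, div_pow, div_pow,
      div_eq_div_iff (pow_ne_zero _ hab) (pow_ne_zero _ hcd)] at this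
    linear_combination this
  obtain ⟨j, hj, e⟩ := exists_eq_of_sum_pow_eq (injOn_pow_mul_pow_sub ha hb hu)
    (lam := fun i => (c - d) ^ m * ((-1) ^ (i + m) * (m.choose i : K)))
    (mu := fun j => (a - b) ^ m * ((-1) ^ (j + m) * (m.choose j : K)))
    (fun i hi => mul_ne_zero (pow_ne_zero _ hcd) (mul_ne_zero (pow_ne_zero _ (by norm_num))
      (Nat.cast_ne_zero.2 (Nat.choose_pos (Nat.lt_succ_iff.1 (mem_range.1 hi))).ne')))
    (fun n => by
      have := hsum n
      rw [sub_pow_pow_eq_sum, sub_pow_pow_eq_sum, mul_sum, mul_sum] at this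
      simpa only [mul_assoc] using this)
    (mem_range.2 (Nat.lt_succ_of_le hi))
  exact ⟨j, Nat.lt_succ_iff.1 (mem_range.1 hj), e⟩

theorem exists_zpow_eq_div_of_forall_exists_eq (hb : b ≠ 0) (hc : c ≠ 0) (hd : d ≠ 0)
    (hm : m ≠ 0) (h : ∀ i ≤ m, ∃ j ≤ m, c ^ j * d ^ (m - j) = a ^ i * b ^ (m - i)) :
    ∃ k : ℤ, a / b = (c / d) ^ k := by
  have hmem : ∀ i ≤ m, ∃ j : ℕ, d ^ m * (c / d) ^ j = b ^ m * (a / b) ^ i := by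
    intro i hi
    obtain ⟨j, hj, e⟩ := h i hi
    exact ⟨j, by rwa [← pow_mul_pow_sub_eq hd hj, ← pow_mul_pow_sub_eq hb hi]⟩
  obtain ⟨j₀, e₀⟩ := hmem 0 (Nat.zero_le m)
  obtain ⟨j₁, e₁⟩ := hmem 1 (Nat.one_le_iff_ne_zero.2 hm)
  refine ⟨j₁ - j₀, ?_⟩
  rw [zpow_sub₀ (div_ne_zero hc hd), zpow_natCast, zpow_natCast,
    ← mul_div_mul_left ((c / d) ^ j₁) _ (pow_ne_zero m hd), e₀, e₁, pow_zero, mul_one, pow_one,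
    mul_div_cancel_left₀ _ (pow_ne_zero m hb)]

theorem eq_of_div_eq_div_of_add_eq_one (hb : b ≠ 0) (hd : d ≠ 0) (h : a / b = c / d)
    (hab : a + b = 1) (hcd : c + d = 1) : a = c := by
  rw [div_eq_div_iff hb hd] at h
  linear_combination h - a * hcd + c * hab

theorem mul_eq_mul_of_lucasU_pow_eq [CharZero K] (hm : m ≠ 0) (ha : a ≠ 0) (hb : b ≠ 0)
    (hc : c ≠ 0) (hd : d ≠ 0) (hab : a + b = 1) (hcd : c + d = 1) (hu : ¬IsOfFinOrder (a / b))
    (hw : ¬IsOfFinOrder (c / d)) (h : ∀ n, lucasU a b n ^ m = lucasU c d n ^ m) :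
    c * d = a * b := by
  obtain ⟨k, hk⟩ := exists_zpow_eq_div_of_forall_exists_eq hb hc hd hm fun i =>
    exists_pow_mul_pow_eq_of_lucasU_pow_eq ha hb hu (ne_of_not_isOfFinOrder_div hd hw) h
  obtain ⟨l, hl⟩ := exists_zpow_eq_div_of_forall_exists_eq hd ha hb hm fun i =>
    exists_pow_mul_pow_eq_of_lucasU_pow_eq hc hd hw (ne_of_not_isOfFinOrder_div hb hu)
      fun n => (h n).symm
  rcases eq_or_inv_eq_of_zpow_eq_of_zpow_eq (div_ne_zero ha hb) hu hk hl with e | e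
  · obtain rfl := eq_of_div_eq_div_of_add_eq_one hb hd e hab hcd
    obtain rfl : b = d := add_left_cancel (hab.trans hcd.symm)
    rfl
  · rw [inv_div] at e
    obtain rfl := eq_of_div_eq_div_of_add_eq_one ha hd e (by rw [add_comm, hab]) hcd
    obtain rfl : a = d := add_left_cancel ((add_comm b a ▸ hab).trans hcd.symm)
    exact mul_comm _ _

end Progression

open IntermediateField Polynomial in
theorem mem_range_algebraMap_of_forall_algHom_eq {F L : Type*} [Field F] [Field L] [Algebra F L]
    [IsAlgClosed L] [PerfectField F] {S : Set L} (hS : ∀ s ∈ S, IsIntegral F s) {x : L}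
    (hx : x ∈ adjoin F S) (h : ∀ σ : adjoin F S →ₐ[F] L, σ ⟨x, hx⟩ = x) :
    x ∈ (algebraMap F L).range := by
  by_contra hxF
  have hint : IsIntegral F x :=
    isIntegral_iff.mp ((isAlgebraic_adjoin hS).isIntegral.isIntegral ⟨x, hx⟩)
  have hcard := card_rootSet_eq_natDegree (K := L)
    (PerfectField.separable_of_irreducible (minpoly.irreducible hint)) (IsAlgClosed.splits _)
  obtain ⟨⟨y, hy⟩, hyx⟩ := Fintype.exists_ne_of_one_lt_card
    (hcard ▸ (minpoly.two_le_natDegree_iff hint).mpr hxF)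
    ⟨x, (mem_rootSet.2 ⟨minpoly.ne_zero hint, minpoly.aeval F x⟩)⟩
  obtain ⟨σ, hσ⟩ := exists_algHom_adjoin_of_splits_of_aeval
    (fun s hs => ⟨hS s hs, IsAlgClosed.splits _⟩) hx (mem_rootSet.1 hy).2
  exact hyx (Subtype.ext (hσ ▸ h σ))

open IntermediateField in
theorem exists_rat_eq_mul_one_sub_of_lucasU_pow_eq {a : ℂ} {m : ℕ} (hm : m ≠ 0)
    (ha : IsAlgebraic ℚ a) (ha0 : a ≠ 0) (ha1 : 1 - a ≠ 0) (hu : ¬IsOfFinOrder (a / (1 - a)))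
    (hQ : ∀ n, ∃ q : ℚ, lucasU a (1 - a) n ^ m = q) : ∃ q : ℚ, a * (1 - a) = q := by
  set A := AdjoinSimple.gen ℚ a
  have hX : a * (1 - a) ∈ ℚ⟮a⟯ := (A * (1 - A)).2
  suffices hσ : ∀ σ : ℚ⟮a⟯ →ₐ[ℚ] ℂ, σ ⟨_, hX⟩ = a * (1 - a) by
    obtain ⟨q, hq⟩ := mem_range_algebraMap_of_forall_algHom_eq (S := {a})
      (by simpa using ha.isIntegral) hX hσ
    exact ⟨q, hq.symm⟩
  intro σ
  have hfix : ∀ t : ℚ⟮a⟯, (∃ q : ℚ, (t : ℂ) = q) → σ t = t := by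
    rintro t ⟨q, hq⟩
    obtain rfl : t = algebraMap ℚ ℚ⟮a⟯ q := Subtype.ext (by simpa using hq)
    simp
  have hfin : ∀ t : ℚ⟮a⟯, IsOfFinOrder (σ t) ↔ IsOfFinOrder (t : ℂ) := fun t =>
    (σ.injective.isOfFinOrder_iff (f := (σ : ℚ⟮a⟯ →* ℂ))).trans
      (Subtype.val_injective.isOfFinOrder_iff (f := ((ℚ⟮a⟯).val : ℚ⟮a⟯ →* ℂ))).symm
  have hσ1 : σ (1 - A) = 1 - σ A := by simp
  change σ (A * (1 - A)) = _
  rw [map_mul, hσ1]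
  refine mul_eq_mul_of_lucasU_pow_eq hm ha0 ha1 ?_ ?_ (add_sub_cancel a 1) (add_sub_cancel _ 1)
    hu ?_ fun n => ?_
  · exact (map_ne_zero σ).2 fun h => ha0 (congrArg Subtype.val h)
  · rw [← hσ1]
    exact (map_ne_zero σ).2 fun h => ha1 (congrArg Subtype.val h)
  · rw [← hσ1, ← map_div₀, hfin]
    exact hu
  · rw [← hσ1, ← map_lucasU, ← map_pow, hfix _ (hQ n)]
    rfl

theorem stmt13 (α β : ℂ) (hα : IsIntegral ℤ α) (hβ : IsIntegral ℤ β)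
    (hα0 : α ≠ 0) (hβ0 : β ≠ 0)
    (hnru : ∀ t : ℕ, 1 ≤ t → (α / β) ^ t ≠ 1)
    (m : ℕ) (hm : 2 ≤ m)
    (hint : ∀ n : ℕ, 1 ≤ n → ∃ z : ℤ, ((α ^ n - β ^ n) / (α - β)) ^ m = (z : ℂ)) :
    ∃ γ α' β' : ℂ, α = γ * α' ∧ β = γ * β' ∧ (∃ q : ℚ, γ ^ m = (q : ℂ)) ∧
      ((∀ n : ℕ, 1 ≤ n → ∃ q : ℚ, (α' ^ n - β' ^ n) / (α' - β') = (q : ℂ)) ∨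
       (Even m ∧ ∃ r s : ℤ, Int.gcd r s = 1 ∧ ∃ ρ σ : ℂ,
          ρ ^ 2 = (r : ℂ) ∧ σ ^ 2 = (s : ℂ) ∧ α' = ρ + σ ∧ β' = ρ - σ)) := by
  have hu : ¬IsOfFinOrder (α / β) := by
    rw [isOfFinOrder_iff_pow_eq_one]
    rintro ⟨t, ht, h⟩
    exact hnru t ht h
  have he : α + β ≠ 0 := fun h => hnru 2 one_le_two (by
    rw [show α = -β by linear_combination h, neg_div, div_self hβ0]
    norm_num)
  obtain ⟨z₂, hz₂⟩ := hint 2 one_le_two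
  have hem : (α + β) ^ m = z₂ := by
    rw [← hz₂, ← lucasU, lucasU_two (ne_of_not_isOfFinOrder_div hβ0 hu)]
  set a := α / (α + β)
  have hb : β / (α + β) = 1 - a := by
    rw [eq_sub_iff_add_eq, add_comm, ← add_div, div_self he]
  have ha1 : 1 - a ≠ 0 := hb ▸ div_ne_zero hβ0 he
  have hu' : ¬IsOfFinOrder (a / (1 - a)) := by
    rwa [← hb, div_div_div_cancel_right₀ he]
  have hQ : ∀ n, ∃ q : ℚ, lucasU a (1 - a) n ^ m = q := by
    rintro (_ | n)
    · exact ⟨0, by simp [zero_pow (by omega : m ≠ 0)]⟩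
    · obtain ⟨z, hz⟩ := hint (n + 1) n.succ_pos
      refine ⟨z / z₂ ^ n, ?_⟩
      rw [← hb, lucasU_div_succ he, div_pow, ← pow_mul, mul_comm, pow_mul, hem, lucasU, hz]
      norm_cast
  have ha : IsAlgebraic ℚ a :=
    hα.tower_top.isAlgebraic.mul (hα.tower_top.isAlgebraic.add hβ.tower_top.isAlgebraic).inv
  obtain ⟨p, hp⟩ := exists_rat_eq_mul_one_sub_of_lucasU_pow_eq (by omega) ha
    (div_ne_zero hα0 he) ha1 hu' hQ
  refine ⟨α + β, a, 1 - a, (mul_div_cancel₀ α he).symm, by rw [← hb, mul_div_cancel₀ β he],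
    ⟨z₂, by rw [hem]; norm_cast⟩, Or.inl fun n _ => ?_⟩
  obtain ⟨q, hq⟩ := lucasU_mem_of_add_mem_of_mul_mem (S := (algebraMap ℚ ℂ).range)
    (ne_of_not_isOfFinOrder_div ha1 hu') ⟨1, by simp⟩ ⟨p, by simp [hp]⟩ n
  exact ⟨q, hq.symm⟩
end

section
/- Let K be a number field with ring of integers 𝒪, let P be a nonzero prime ideal of 𝒪 lying above the rational prime p, and let e_P ≥ 1 be determined by p ∈ P^{e_P}, p ∉ P^{e_P+1}. Let γ ∈ 𝒪 and let j, e be positive integers with γ^j − 1 ∈ P^e and γ^j − 1 ∉ P^{e+1}, and assume e·(p − 1) > e_P. Then for every positive integer r not divisible by p and every natural number f, one has γ^{j·r·p^f} − 1 ∈ P^{e + f·e_P} and γ^{j·r·p^f} − 1 ∉ P^{e + f·e_P + 1}. -/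
open Ideal Finset

section Aux

variable {R : Type*} [CommRing R] [IsDomain R] [IsDedekindDomain R]

/-- Exact valuations multiply. -/
lemma aux_exact_mul {P : Ideal R} (hprime : Prime P) {a b : R} {m n : ℕ}
    (ha : a ∈ P ^ m) (ha' : a ∉ P ^ (m + 1))
    (hb : b ∈ P ^ n) (hb' : b ∉ P ^ (n + 1)) :
    a * b ∈ P ^ (m + n) ∧ a * b ∉ P ^ (m + n + 1) := by
  rw [← Ideal.dvd_span_singleton] at ha hb ha' hb' ⊢
  constructor
  · rw [← Ideal.span_singleton_mul_span_singleton, pow_add]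
    exact mul_dvd_mul ha hb
  · rw [← Ideal.dvd_span_singleton, ← Ideal.span_singleton_mul_span_singleton]
    obtain ⟨A, hA⟩ := ha
    obtain ⟨B, hB⟩ := hb
    have hAP : ¬ P ∣ A := by
      intro ⟨C, hC⟩
      exact ha' ⟨C, by rw [hA, hC]; ring⟩
    have hBP : ¬ P ∣ B := by
      intro ⟨C, hC⟩
      exact hb' ⟨C, by rw [hB, hC]; ring⟩
    intro h
    rw [hA, hB] at h
    have h2 : P ^ (m + n) * P ∣ P ^ (m + n) * (A * B) := by
      rw [← pow_succ]
      exact dvd_trans h ⟨1, by rw [mul_one]; ring⟩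
    have hne : P ^ (m + n) ≠ 0 := pow_ne_zero _ hprime.ne_zero
    rw [mul_dvd_mul_iff_left hne] at h2
    rcases hprime.dvd_mul.mp h2 with h3 | h3
    · exact hAP h3
    · exact hBP h3

lemma aux_shift {P : Ideal R} {a b : R} {m : ℕ}
    (ha : a ∈ P ^ m) (ha' : a ∉ P ^ (m + 1)) (hb : b ∈ P ^ (m + 1)) :
    a + b ∈ P ^ m ∧ a + b ∉ P ^ (m + 1) := by
  refine ⟨Ideal.add_mem _ ha ((Ideal.pow_le_pow_right (by omega)) hb), fun h => ha' ?_⟩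
  have := Ideal.sub_mem _ h hb
  simpa using this

/-- Main binomial step. -/
lemma aux_step {P : Ideal R} (hprime : Prime P) {s : R} {m c : ℕ} (hm : 1 ≤ m)
    (hs : s ∈ P ^ m) (hs' : s ∉ P ^ (m + 1))
    {n : ℕ} (hn : 0 < n)
    (hnc : (n : R) ∈ P ^ c) (hnc' : (n : R) ∉ P ^ (c + 1))
    (hhigh : ∀ k, 2 ≤ k → k ≤ n → ((n.choose k : R)) * s ^ k ∈ P ^ (c + m + 1)) :
    (1 + s) ^ n - 1 ∈ P ^ (c + m) ∧ (1 + s) ^ n - 1 ∉ P ^ (c + m + 1) := by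
  have hsplit : Finset.range (n + 1) = insert 0 (insert 1 (Finset.Ico 2 (n + 1))) := by
    ext k
    simp only [Finset.mem_range, Finset.mem_insert, Finset.mem_Ico]
    omega
  have key : (1 + s) ^ n - 1 =
      (n : R) * s + ∑ k ∈ Finset.Ico 2 (n + 1), (n.choose k : R) * s ^ k := by
    have := add_pow s 1 n
    rw [add_comm 1 s, this, hsplit, Finset.sum_insert (by simp),
      Finset.sum_insert (by simp)]
    simp only [one_pow, mul_one, pow_zero, pow_one]
    rw [Nat.choose_zero_right, Nat.choose_one_right]
    have : ∀ k ∈ Finset.Ico 2 (n + 1), s ^ k * (n.choose k : R)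
        = (n.choose k : R) * s ^ k := fun k _ => mul_comm _ _
    rw [Finset.sum_congr rfl this]
    ring
  rw [key]
  have hns := aux_exact_mul hprime hnc hnc' hs hs'
  have hsum : (∑ k ∈ Finset.Ico 2 (n + 1), (n.choose k : R) * s ^ k) ∈ P ^ (c + m + 1) :=
    Ideal.sum_mem _ fun k hk => by
      rw [Finset.mem_Ico] at hk
      exact hhigh k hk.1 (by omega)
  exact aux_shift hns.1 hns.2 hsum

end Aux

theorem stmt14 (K : Type*) [Field K] [NumberField K]
    (P : Ideal (NumberField.RingOfIntegers K)) (hP : P.IsPrime) (hPbot : P ≠ ⊥)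
    (p : ℕ) (hp : p.Prime) (eP : ℕ) (heP : 1 ≤ eP)
    (hpin : (p : NumberField.RingOfIntegers K) ∈ P ^ eP)
    (hpout : (p : NumberField.RingOfIntegers K) ∉ P ^ (eP + 1))
    (γ : NumberField.RingOfIntegers K) (j e : ℕ) (hj : 0 < j) (he : 0 < e)
    (hγin : γ ^ j - 1 ∈ P ^ e) (hγout : γ ^ j - 1 ∉ P ^ (e + 1))
    (hcond : eP < e * (p - 1)) :
    ∀ r : ℕ, 0 < r → ¬ p ∣ r → ∀ f : ℕ,
      γ ^ (j * r * p ^ f) - 1 ∈ P ^ (e + f * eP) ∧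
      γ ^ (j * r * p ^ f) - 1 ∉ P ^ (e + f * eP + 1) := by
  have hprime : Prime P := Ideal.prime_of_isPrime hPbot hP
  have hpP : (p : NumberField.RingOfIntegers K) ∈ P := by
    have : P ^ eP ≤ P := Ideal.pow_le_self (by omega)
    exact this hpin
  intro r hr hpr
  -- r is not in P
  have hrP : (r : NumberField.RingOfIntegers K) ∉ P := by
    intro hmem
    have hcop : Nat.Coprime p r := (Nat.Prime.coprime_iff_not_dvd hp).mpr hpr
    have : IsCoprime (p : ℤ) (r : ℤ) := Nat.isCoprime_iff_coprime.mpr hcop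
    obtain ⟨u, v, huv⟩ := this
    have h1 : (1 : NumberField.RingOfIntegers K) ∈ P := by
      have := congrArg (fun z : ℤ => (z : NumberField.RingOfIntegers K)) huv
      push_cast at this
      rw [← this]
      exact Ideal.add_mem _ (Ideal.mul_mem_left _ _ hpP) (Ideal.mul_mem_left _ _ hmem)
    exact hP.ne_top (Ideal.eq_top_of_isUnit_mem _ h1 isUnit_one)
  -- base case: exact valuation e for γ^(j*r)
  have base : γ ^ (j * r) - 1 ∈ P ^ e ∧ γ ^ (j * r) - 1 ∉ P ^ (e + 1) := by
    have hx : γ ^ (j * r) = (1 + (γ ^ j - 1)) ^ r := by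
      rw [pow_mul]; ring_nf
    rw [hx]
    have hrc : (r : NumberField.RingOfIntegers K) ∈ P ^ 0 := by simp
    have hrc' : (r : NumberField.RingOfIntegers K) ∉ P ^ (0 + 1) := by simpa using hrP
    have := aux_step hprime he hγin hγout hr hrc hrc' (fun k hk2 hkr => by
      apply Ideal.mul_mem_left
      have h1 : (γ ^ j - 1) ^ k ∈ P ^ (k * e) := by
        rw [mul_comm k e, pow_mul]
        exact Ideal.pow_mem_pow (by simpa [pow_mul] using hγin) k
      exact Ideal.pow_le_pow_right (by nlinarith) h1)
    simpa using this
  -- inductive step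
  intro f
  induction f with
  | zero => simpa using base
  | succ f ih =>
    set m := e + f * eP with hmdef
    have hme : e ≤ m := by omega
    have hy : γ ^ (j * r * p ^ (f + 1))
        = (1 + (γ ^ (j * r * p ^ f) - 1)) ^ p := by
      rw [pow_succ, ← mul_assoc, pow_mul]; ring_nf
    have hmcond : eP + m + 1 ≤ m * p := by
      have h1 : eP + 1 ≤ e * (p - 1) := hcond
      have h2 : e * (p - 1) ≤ m * (p - 1) := Nat.mul_le_mul_right _ hme
      have hp2 : 2 ≤ p := hp.two_le
      have : m * p = m * (p - 1) + m := by
        have : p = (p - 1) + 1 := by omega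
        nlinarith [this]
      omega
    have step := aux_step hprime (by omega : 1 ≤ m) ih.1 ih.2 hp.pos hpin hpout
      (fun k hk2 hkp => by
        have hsk : (γ ^ (j * r * p ^ f) - 1) ^ k ∈ P ^ (k * m) := by
          rw [mul_comm k m, pow_mul]
          exact Ideal.pow_mem_pow ih.1 k
        rcases eq_or_lt_of_le hkp with hkeq | hklt
        · subst hkeq
          apply Ideal.mul_mem_left
          exact Ideal.pow_le_pow_right (by nlinarith) hsk
        · -- k < p : p divides choose p k
          obtain ⟨t, ht⟩ := Nat.Prime.dvd_choose_self hp (by omega) hklt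
          rw [ht]
          push_cast
          have h1 : (p : NumberField.RingOfIntegers K) * (t : NumberField.RingOfIntegers K) * (γ ^ (j * r * p ^ f) - 1) ^ k
              = ((p : NumberField.RingOfIntegers K) * (γ ^ (j * r * p ^ f) - 1) ^ k) * (t : NumberField.RingOfIntegers K) := by ring
          rw [h1]
          apply Ideal.mul_mem_right
          have hsk' : (γ ^ (j * r * p ^ f) - 1) ^ k ∈ P ^ (m + 1) :=
            Ideal.pow_le_pow_right (by nlinarith) hsk
          have : (p : NumberField.RingOfIntegers K) * (γ ^ (j * r * p ^ f) - 1) ^ k ∈ P ^ eP * P ^ (m + 1) :=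
            Ideal.mul_mem_mul hpin hsk'
          rwa [← pow_add] at this)
    rw [hy]
    have harith : eP + m = e + (f + 1) * eP := by rw [hmdef]; ring
    rw [harith] at step
    exact step
end

section
/- Let K be a number field and let α, β be nonzero elements of K that are multiplicatively independent: for all integers a, b, if α^a·β^b = 1 (with integer, possibly negative, exponents) then a = 0 and b = 0. Then the set of prime numbers p for which there exist integers r, s, not both divisible by p, and an element λ ∈ K with α^r·β^s = λ^p, is finite. -/
/-!
Let `S` be the finite set of primes of `K` at which `α` or `β` is not a unit. The `S`-units of `K`
form a finitely generated abelian group: valuations at `S` map them to `ℤ^S` with kernel the units of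
`𝓞 K`, which are finitely generated by Dirichlet's unit theorem. A relation `α^r β^s = λ^p` forces
`λ` to be an `S`-unit, so it is a relation `r a + s b = p c` in a finitely generated `ℤ`-module in
which `a`, `b` are independent. Modulo torsion the module is free, and some `2 × 2` minor `D` of the
coordinates of `a`, `b` is nonzero; the relation gives `p ∣ D r` and `p ∣ D s`, hence `p ∣ D` when
`p` does not divide both `r` and `s`.
-/

open IsDedekindDomain IsDedekindDomain.HeightOneSpectrum NumberField Submodule

section DedekindDomain

variable {R : Type*} [CommRing R] [IsDedekindDomain R] {K : Type*} [Field K] [Algebra R K]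
  [IsFractionRing R K]

namespace IsDedekindDomain.HeightOneSpectrum

theorem finite_setOf_valuation_ne_one {x : K} (hx : x ≠ 0) :
    {v : HeightOneSpectrum R | v.valuation K x ≠ 1}.Finite := by
  refine ((Support.finite R x).union (Support.finite R x⁻¹)).subset fun v hv => ?_
  rcases (hv : v.valuation K x ≠ 1).lt_or_gt with h | h
  · right
    show 1 < v.valuation K x⁻¹
    rw [map_inv₀]
    exact one_lt_inv_iff₀.mpr ⟨(v.valuation K).pos_iff.mpr hx, h⟩
  · exact Or.inl h

theorem mem_range_unitsMap_of_valuation_eq_one {x : Kˣ}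
    (hx : ∀ v : HeightOneSpectrum R, v.valuation K x = 1) :
    x ∈ (Units.map (algebraMap R K : R →* K)).range := by
  obtain ⟨a, ha⟩ := mem_integers_of_valuation_le_one K (x : K) fun v => (hx v).le
  obtain ⟨b, hb⟩ := mem_integers_of_valuation_le_one K ((x⁻¹ : Kˣ) : K) fun v => by
    rw [Units.val_inv_eq_inv_val, map_inv₀, hx v, inv_one]
  have hab : a * b = 1 := IsFractionRing.injective R K (by simp [ha, hb])
  exact ⟨⟨a, b, hab, mul_comm b a ▸ hab⟩, Units.ext ha⟩

theorem valuationOfNeZero_eq_one_iff (v : HeightOneSpectrum R) (x : Kˣ) :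
    v.valuationOfNeZero x = 1 ↔ v.valuation K x = 1 := by
  rw [← valuationOfNeZero_eq, ← WithZero.coe_one, WithZero.coe_inj]

end IsDedekindDomain.HeightOneSpectrum

namespace Set

variable {S : Set (HeightOneSpectrum R)}

theorem mem_unit_of_pow_mem {x : Kˣ} {n : ℕ} (hn : n ≠ 0) (h : x ^ n ∈ S.unit K) :
    x ∈ S.unit K := fun v hv => by
  have := h v hv
  rw [← valuationOfNeZero_eq_one_iff, map_pow, pow_eq_one_iff_left hn] at this
  exact (valuationOfNeZero_eq_one_iff v x).mp this

variable (S K) in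
noncomputable def unitsToUnit : Rˣ →* S.unit K :=
  (Units.map (algebraMap R K : R →* K)).codRestrict _ fun u v _ => by
    rw [← valuationOfNeZero_eq_one_iff, valuation_of_unit_eq]

theorem Finite.moduleFinite_additive_unit (hS : S.Finite) [Module.Finite ℤ (Additive Rˣ)] :
    Module.Finite ℤ (Additive (S.unit K)) := by
  have : Finite S := hS
  let f : Additive (S.unit K) →ₗ[ℤ] (S → ℤ) :=
    (AddMonoidHom.pi fun v : S => MonoidHom.toAdditiveLeft
      ((v : HeightOneSpectrum R).valuationOfNeZero.comp (S.unit K).subtype)).toIntLinearMap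
  let g : Additive Rˣ →ₗ[ℤ] Additive (S.unit K) := (S.unitsToUnit K).toAdditive.toIntLinearMap
  have hker : LinearMap.ker f ≤ LinearMap.range g := by
    intro x hx
    have hval : ∀ v : HeightOneSpectrum R,
        v.valuation K ((Additive.toMul x : S.unit K) : Kˣ) = 1 := by
      intro v
      by_cases hv : v ∈ S
      · rw [← valuationOfNeZero_eq_one_iff]
        exact congrFun hx ⟨v, hv⟩
      · exact (Additive.toMul x).2 v hv
    obtain ⟨u, hu⟩ := mem_range_unitsMap_of_valuation_eq_one hval
    exact ⟨Additive.ofMul u, Subtype.ext hu⟩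
  rw [Module.finite_def]
  refine Submodule.fg_of_fg_map_of_fg_inf_ker f (IsNoetherian.noetherian _) ?_
  rw [top_inf_eq, ← Submodule.map_comap_eq_of_le hker]
  exact (IsNoetherian.noetherian _).map g

end Set

end DedekindDomain

section Module

variable {R M : Type*} [CommRing R] [AddCommGroup M] [Module R M]

theorem Module.Basis.exists_ne_zero_dvd_mul_of_smul_add_smul_eq_smul [Nontrivial R] {ι : Type*}
    (b : Module.Basis ι R M) {x y : M} (hxy : LinearIndependent R ![x, y]) :
    ∃ D : R, D ≠ 0 ∧ ∀ (n r s : R) (c : M), r • x + s • y = n • c → n ∣ D * r ∧ n ∣ D * s := by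
  rw [LinearIndependent.pair_iff] at hxy
  set A := b.repr x
  set B := b.repr y
  obtain ⟨i, j, hD⟩ : ∃ i j, A i * B j - A j * B i ≠ 0 := by
    by_contra! hminors
    obtain ⟨i, hi⟩ : ∃ i, A i ≠ 0 := by
      by_contra! hA
      have hx : x = 0 := b.repr.map_eq_zero_iff.mp (Finsupp.ext hA)
      exact one_ne_zero (hxy 1 0 (by simp [hx])).1
    refine hi (neg_eq_zero.mp (hxy (B i) (-A i) (b.repr.injective ?_)).2)
    ext j
    simp only [map_add, map_smul, map_zero, Finsupp.add_apply, Finsupp.smul_apply, smul_eq_mul,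
      Finsupp.coe_zero, Pi.zero_apply]
    linear_combination -hminors i j
  refine ⟨_, hD, fun n r s c hc => ?_⟩
  have hcoord : ∀ k, r * A k + s * B k = n * b.repr c k := fun k => by
    simpa using congrArg (fun z => b.repr z k) hc
  exact ⟨⟨B j * b.repr c i - B i * b.repr c j,
      by linear_combination B j * hcoord i - B i * hcoord j⟩,
    ⟨A i * b.repr c j - A j * b.repr c i,
      by linear_combination A i * hcoord j - A j * hcoord i⟩⟩

theorem LinearIndependent.mkQ_torsion {ι : Type*} {v : ι → M} (hv : LinearIndependent R v) :
    LinearIndependent R ((torsion R M).mkQ ∘ v) := by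
  refine hv.map (Submodule.disjoint_def.mpr fun z hz hzt => ?_)
  rw [Submodule.ker_mkQ] at hzt
  obtain ⟨l, rfl⟩ := Finsupp.mem_span_range_iff_exists_finsupp.mp hz
  obtain ⟨⟨m, hm⟩, hmz⟩ := hzt
  have hml : m • l = 0 := linearIndependent_iff.mp hv _ (by
    rw [map_smul, Finsupp.linearCombination_apply]; exact hmz)
  have hl : l = 0 := by
    ext i
    exact (mem_nonZeroDivisors_iff_right.mp hm) _ (by simpa [mul_comm] using congrArg (· i) hml)
  simp [hl]

variable [IsDomain R] [IsPrincipalIdealRing R] [Module.Finite R M]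

theorem LinearIndependent.exists_ne_zero_dvd_mul_of_smul_add_smul_eq_smul {x y : M}
    (hxy : LinearIndependent R ![x, y]) :
    ∃ D : R, D ≠ 0 ∧ ∀ (n r s : R) (c : M), r • x + s • y = n • c → n ∣ D * r ∧ n ∣ D * s := by
  have hxy' : LinearIndependent R ![(torsion R M).mkQ x, (torsion R M).mkQ y] := by
    have := hxy.mkQ_torsion
    rwa [← FinVec.map_eq] at this
  obtain ⟨D, hD, hdvd⟩ := (Module.Free.chooseBasis R (M ⧸ torsion R M)
    ).exists_ne_zero_dvd_mul_of_smul_add_smul_eq_smul hxy'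
  exact ⟨D, hD, fun n r s c hc => hdvd n r s ((torsion R M).mkQ c) (by
    simpa using congrArg (torsion R M).mkQ hc)⟩

end Module

theorem LinearIndependent.finite_setOf_prime_smul_add_smul_eq_smul {M : Type*} [AddCommGroup M]
    [Module.Finite ℤ M] {x y : M} (hxy : LinearIndependent ℤ ![x, y]) :
    {p : ℕ | p.Prime ∧ ∃ r s : ℤ, ¬ ((p : ℤ) ∣ r ∧ (p : ℤ) ∣ s) ∧
      ∃ c : M, r • x + s • y = (p : ℤ) • c}.Finite := by
  obtain ⟨D, hD, hdvd⟩ := hxy.exists_ne_zero_dvd_mul_of_smul_add_smul_eq_smul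
  refine (Nat.divisors D.natAbs).finite_toSet.subset ?_
  rintro p ⟨hp, r, s, hrs, c, hc⟩
  have hpD : (p : ℤ) ∣ D := by
    have hp' := Nat.prime_iff_prime_int.mp hp
    obtain ⟨hr, hs⟩ := hdvd p r s c hc
    by_contra hpD
    exact hrs ⟨(hp'.dvd_or_dvd hr).resolve_left hpD, (hp'.dvd_or_dvd hs).resolve_left hpD⟩
  simpa [Int.natCast_dvd, hD] using hpD

theorem stmt16 (K : Type*) [Field K] [NumberField K] (α β : K)
    (hα : α ≠ 0) (hβ : β ≠ 0)
    (hindep : ∀ a b : ℤ, α ^ a * β ^ b = 1 → a = 0 ∧ b = 0) :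
    {p : ℕ | p.Prime ∧ ∃ r s : ℤ, ¬ ((p : ℤ) ∣ r ∧ (p : ℤ) ∣ s) ∧
      ∃ lam : K, α ^ r * β ^ s = lam ^ p}.Finite := by
  let S : Set (HeightOneSpectrum (𝓞 K)) :=
    {v | v.valuation K α ≠ 1} ∪ {v | v.valuation K β ≠ 1}
  have : Module.Finite ℤ (Additive (S.unit K)) :=
    ((finite_setOf_valuation_ne_one hα).union
      (finite_setOf_valuation_ne_one hβ)).moduleFinite_additive_unit
  let a : S.unit K := ⟨Units.mk0 α hα, fun v hv => not_not.mp (not_or.mp hv).1⟩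
  let b : S.unit K := ⟨Units.mk0 β hβ, fun v hv => not_not.mp (not_or.mp hv).2⟩
  have hab : LinearIndependent ℤ ![Additive.ofMul a, Additive.ofMul b] :=
    LinearIndependent.pair_iff.mpr fun r s h => hindep r s (by
      simpa [a, b] using congrArg (fun z => (((Additive.toMul z : S.unit K) : Kˣ) : K)) h)
  refine hab.finite_setOf_prime_smul_add_smul_eq_smul.subset ?_
  rintro p ⟨hp, r, s, hrs, lam, hlam⟩
  have hlam0 : lam ≠ 0 := by
    rintro rfl
    rw [zero_pow hp.ne_zero] at hlam
    exact mul_ne_zero (zpow_ne_zero r hα) (zpow_ne_zero s hβ) hlam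
  have hpow : Units.mk0 lam hlam0 ^ p = ((a ^ r * b ^ s : S.unit K) : Kˣ) := by
    ext; simp [a, b, hlam]
  have hmem : Units.mk0 lam hlam0 ∈ S.unit K :=
    Set.mem_unit_of_pow_mem hp.ne_zero (hpow ▸ SetLike.coe_mem _)
  refine ⟨hp, r, s, hrs, Additive.ofMul ⟨_, hmem⟩, ?_⟩
  ext
  simp [a, b, hlam]
end

section
/- Let u : ℕ → ℤ be a linear division sequence with u_0 ≠ 0 (note that the division property gives u_m divides u_0 for every m ≥ 1, since every m divides 0). Then u is eventually periodic: there exist N ≥ 0 and T ≥ 1 such that u_{n+T} = u_n for all n ≥ N. -/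
theorem stmt19 (u : ℕ → ℤ) (hu : IsLinearDivisionSequence u) (hu0 : u 0 ≠ 0) :
    ∃ N T : ℕ, 1 ≤ T ∧ ∀ n : ℕ, N ≤ n → u (n + T) = u n := by
  obtain ⟨⟨k, hk1, c, hck, hrec⟩, hdiv⟩ := hu
  -- all values u m (m ≥ 1) are divisors of u 0, hence bounded
  have hB : ∀ m : ℕ, 1 ≤ m → u m ∈ Finset.Icc (-(|u 0|)) (|u 0|) := by
    intro m hm
    have hd : u m ∣ u 0 := hdiv m 0 hm (dvd_zero m)
    have hd' : |u m| ∣ |u 0| := (abs_dvd _ _).mpr ((dvd_abs _ _).mpr hd)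
    have hle : |u m| ≤ |u 0| := Int.le_of_dvd (abs_pos.mpr hu0) hd'
    have := abs_le.mp hle
    simp only [Finset.mem_Icc]
    omega
  -- main argument: a repeated state gives eventual periodicity
  have main : ∀ a b : ℕ, a < b → (∀ i : Fin k, u (a + 1 + i) = u (b + 1 + i)) →
      ∃ N T : ℕ, 1 ≤ T ∧ ∀ n : ℕ, N ≤ n → u (n + T) = u n := by
    intro a b hab hstate
    refine ⟨a + 1, b - a, by omega, ?_⟩
    intro n
    induction n using Nat.strong_induction_on with
    | _ n ih =>
      intro hn
      by_cases hcase : n < a + 1 + k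
      · have hi : n - (a + 1) < k := by omega
        have heq := hstate ⟨n - (a + 1), hi⟩
        have e1 : a + 1 + (⟨n - (a + 1), hi⟩ : Fin k).val = n := by simp; omega
        have e2 : b + 1 + (⟨n - (a + 1), hi⟩ : Fin k).val = n + (b - a) := by simp; omega
        rw [e1, e2] at heq
        exact heq.symm
      · have h1 : k ≤ n := by omega
        have h2 : k ≤ n + (b - a) := by omega
        rw [hrec n h1, hrec _ h2]
        apply Finset.sum_congr rfl
        intro i hi
        simp only [Finset.mem_Icc] at hi
        have e : n + (b - a) - i = (n - i) + (b - a) := by omega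
        rw [e, ih (n - i) (by omega) (by omega)]
  -- pigeonhole: the state map has a repeat
  set S := Finset.Icc (-(|u 0|)) (|u 0|) with hS
  let g : ℕ → (Fin k → {x // x ∈ S}) := fun n i => ⟨u (n + 1 + i), hB _ (by omega)⟩
  obtain ⟨a, b, hab, hg⟩ := Finite.exists_ne_map_eq_of_infinite g
  have hst : ∀ i : Fin k, u (a + 1 + i) = u (b + 1 + i) := by
    intro i
    have := congrFun hg i
    exact Subtype.ext_iff.mp this
  rcases hab.lt_or_gt with h | h
  · exact main a b h hst
  · exact main b a h (fun i => (hst i).symm)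
end
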